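/- arXiv:1711.10395 — 8 statements merged into one kernel-verified Lean document; each statement's English description precedes it below -/
import Mathlib

section
/- A compact Hausdorff space K has free dimension 0 if and only if K is finite. -/
/-- `C` is a finite closed cover of the space `X`. -/
def IsFCC {X : Type*} [TopologicalSpace X] (C : Finset (Set X)) : Prop :=
  (∀ c ∈ C, IsClosed c) ∧ ⋃₀ (↑C : Set (Set X)) = Set.univ

/-- The cover `C₁` refines the cover `C₂`. -/
def Refines {X : Type*} (C₁ C₂ : Finset (Set X)) : Prop :=
  ∀ c ∈ C₁, ∃ c' ∈ C₂, c ⊆ c'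

/-- The finite cover `C` refines the family of sets `U`. -/
def RefinesFam {X : Type*} (C : Finset (Set X)) (U : Set (Set X)) : Prop :=
  ∀ c ∈ C, ∃ u ∈ U, c ⊆ u

/-- `𝔠` is a topologically cofinal family of finite closed covers of `X`:
every open cover of `X` is refined by some member of `𝔠`. -/
def TopCofinal {X : Type*} [TopologicalSpace X] (𝔠 : Set (Finset (Set X))) : Prop :=
  (∀ C ∈ 𝔠, IsFCC C) ∧
    ∀ U : Set (Set X), (∀ u ∈ U, IsOpen u) → ⋃₀ U = Set.univ →
      ∃ C ∈ 𝔠, RefinesFam C U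

/-- `X` has free dimension ≤ d: there are a topologically cofinal family `𝔠` of finite
closed covers of `X`, a constant `M > 0` and `χ : 𝔠 → ℕ` such that any finitely many
covers `C₁, …, C_k ∈ 𝔠` admit a joint finite closed refinement of cardinality at most
`M * (χ C₁ + ⋯ + χ C_k) ^ d`. -/
def FreeDimLE (X : Type*) [TopologicalSpace X] (d : ℕ) : Prop :=
  ∃ (𝔠 : Set (Finset (Set X))) (M : ℕ) (χ : Finset (Set X) → ℕ), 0 < M ∧
    TopCofinal 𝔠 ∧
    ∀ (k : ℕ) (f : Fin k → Finset (Set X)), (∀ i, f i ∈ 𝔠) →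
      ∃ C : Finset (Set X), IsFCC C ∧ (∀ i, Refines C (f i)) ∧
        C.card ≤ M * (∑ i, χ (f i)) ^ d

/-- A compact Hausdorff space has free dimension 0 iff it is finite. -/
theorem stmt0 (K : Type*) [TopologicalSpace K] [CompactSpace K] [T2Space K] :
    FreeDimLE K 0 ↔ Finite K := by
  constructor
  · rintro ⟨𝔠, M, χ, hM, ⟨hFCC, hcof⟩, hbound⟩
    by_contra hfin
    rw [not_finite_iff_infinite] at hfin
    have hx : Function.Injective (fun i : Fin (M + 1) => Infinite.natEmbedding K i.val) :=
      (Infinite.natEmbedding K).injective.comp Fin.val_injective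
    set x : Fin (M + 1) → K := fun i => Infinite.natEmbedding K i.val with hxdef
    set U : Fin (M + 1) → Set K := fun i => (Set.range x \ {x i})ᶜ with hU
    have hUopen : ∀ i, IsOpen (U i) := fun i =>
      (((Set.finite_range x).subset Set.diff_subset).isClosed).isOpen_compl
    have hUcover : ⋃₀ (Set.range U) = Set.univ := by
      apply Set.eq_univ_iff_forall.mpr
      intro y
      by_cases hy : y ∈ Set.range x
      · obtain ⟨i, rfl⟩ := hy
        exact ⟨U i, ⟨i, rfl⟩, by simp [hU]⟩
      · exact ⟨U 0, ⟨0, rfl⟩, fun h => hy h.1⟩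
    obtain ⟨C₀, hC₀mem, hC₀ref⟩ := hcof (Set.range U) (by rintro u ⟨i, rfl⟩; exact hUopen i)
      hUcover
    obtain ⟨C, hCfcc, hCref, hCcard⟩ := hbound 1 (fun _ => C₀) (fun _ => hC₀mem)
    simp only [pow_zero, mul_one] at hCcard
    have hpt : ∀ i : Fin (M + 1), ∃ c ∈ C, x i ∈ c := by
      intro i
      have : x i ∈ ⋃₀ (↑C : Set (Set K)) := hCfcc.2 ▸ Set.mem_univ _
      obtain ⟨c, hc, hxc⟩ := this
      exact ⟨c, hc, hxc⟩
    choose c hcC hxc using hpt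
    have hmem : ∀ i, ∀ y, y ∈ c i → y ∈ Set.range x → y = x i := by
      intro i y hy hyr
      obtain ⟨c', hc'C₀, hsub⟩ := hCref 0 (c i) (hcC i)
      obtain ⟨u, hu, hsub'⟩ := hC₀ref c' hc'C₀
      obtain ⟨m, rfl⟩ := hu
      have hyi : y ∈ U m := hsub' (hsub hy)
      have hxi : x i ∈ U m := hsub' (hsub (hxc i))
      simp only [hU, Set.mem_compl_iff, Set.mem_diff, Set.mem_singleton_iff, not_and,
        not_not] at hyi hxi
      rw [hyi hyr, hxi ⟨i, rfl⟩]
    have hinj : Function.Injective c := by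
      intro i j hij
      have : x j = x i := hmem i (x j) (hij ▸ hxc j) ⟨j, rfl⟩
      exact (hx this).symm
    have hcard : M + 1 ≤ C.card := by
      have := Finset.card_le_card_of_injOn (s := Finset.univ) (t := C) c
        (fun i _ => hcC i) hinj.injOn
      simpa using this
    omega
  · intro hfin
    have : Fintype K := Fintype.ofFinite K
    classical
    set C₀ : Finset (Set K) := Finset.image (fun a => ({a} : Set K)) Finset.univ with hC₀
    have hC₀fcc : IsFCC C₀ := by
      constructor
      · intro cs hcs
        simp only [hC₀, Finset.mem_image] at hcs
        obtain ⟨a, _, rfl⟩ := hcs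
        exact isClosed_singleton
      · apply Set.eq_univ_iff_forall.mpr
        intro y
        exact ⟨{y}, by simp [hC₀], rfl⟩
    refine ⟨{C₀}, C₀.card + 1, fun _ => 0, Nat.succ_pos _, ⟨?_, ?_⟩, ?_⟩
    · rintro C hC
      simp only [Set.mem_singleton_iff] at hC
      exact hC ▸ hC₀fcc
    · intro Us hUo hUc
      refine ⟨C₀, rfl, ?_⟩
      intro cs hcs
      simp only [hC₀, Finset.mem_image] at hcs
      obtain ⟨a, _, rfl⟩ := hcs
      have : a ∈ ⋃₀ Us := hUc ▸ Set.mem_univ _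
      obtain ⟨u, hu, hau⟩ := this
      exact ⟨u, hu, Set.singleton_subset_iff.mpr hau⟩
    · intro k f hf
      refine ⟨C₀, hC₀fcc, ?_, by simp⟩
      intro i
      have : f i = C₀ := hf i
      rw [this]
      exact fun cs hcs => ⟨cs, hcs, subset_rfl⟩
end

section
/- If K1 and K2 are compact Hausdorff spaces with free dimension at most d1 and d2 respectively, then the product space K1 × K2 has free dimension at most d1 + d2. -/
noncomputable def FreeDimProd.prodCover {K₁ K₂ : Type*} (A : Finset (Set K₁))
    (B : Finset (Set K₂)) : Finset (Set (K₁ × K₂)) :=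
  @Finset.image _ _ (Classical.decEq _) (fun p => p.1 ×ˢ p.2) (A ×ˢ B)

namespace FreeDimProd

variable {K₁ K₂ : Type*}

lemma mem_prodCover {A : Finset (Set K₁)} {B : Finset (Set K₂)} {s : Set (K₁ × K₂)} :
    s ∈ prodCover A B ↔ ∃ a ∈ A, ∃ b ∈ B, s = a ×ˢ b := by
  simp only [prodCover, Finset.mem_image, Finset.mem_product, Prod.exists]
  constructor
  · rintro ⟨a, b, ⟨ha, hb⟩, rfl⟩; exact ⟨a, ha, b, hb, rfl⟩
  · rintro ⟨a, ha, b, hb, rfl⟩; exact ⟨a, b, ⟨ha, hb⟩, rfl⟩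

lemma card_prodCover (A : Finset (Set K₁)) (B : Finset (Set K₂)) :
    (prodCover A B).card ≤ A.card * B.card :=
  by simp only [prodCover]
     exact le_trans (@Finset.card_image_le _ _ _ _ (Classical.decEq _))
       (Finset.card_product A B).le

lemma isFCC_prodCover [TopologicalSpace K₁] [TopologicalSpace K₂]
    {A : Finset (Set K₁)} {B : Finset (Set K₂)} (hA : IsFCC A) (hB : IsFCC B) :
    IsFCC (prodCover A B) := by
  constructor
  · intro c hc
    obtain ⟨a, ha, b, hb, rfl⟩ := mem_prodCover.mp hc
    exact (hA.1 a ha).prod (hB.1 b hb)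
  · apply Set.eq_univ_of_forall
    rintro ⟨x, y⟩
    have hx : x ∈ ⋃₀ (↑A : Set (Set K₁)) := hA.2 ▸ Set.mem_univ x
    have hy : y ∈ ⋃₀ (↑B : Set (Set K₂)) := hB.2 ▸ Set.mem_univ y
    obtain ⟨a, ha, hxa⟩ := hx
    obtain ⟨b, hb, hyb⟩ := hy
    exact ⟨a ×ˢ b, mem_prodCover.mpr ⟨a, Finset.mem_coe.mp ha, b, Finset.mem_coe.mp hb, rfl⟩,
      ⟨hxa, hyb⟩⟩

lemma refines_prodCover {A A' : Finset (Set K₁)} {B B' : Finset (Set K₂)}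
    (hA : Refines A A') (hB : Refines B B') :
    Refines (prodCover A B) (prodCover A' B') := by
  intro c hc
  obtain ⟨a, ha, b, hb, rfl⟩ := mem_prodCover.mp hc
  obtain ⟨a', ha', haa⟩ := hA a ha
  obtain ⟨b', hb', hbb⟩ := hB b hb
  exact ⟨a' ×ˢ b', mem_prodCover.mpr ⟨a', ha', b', hb', rfl⟩, Set.prod_mono haa hbb⟩

lemma prod_cofinal [TopologicalSpace K₁] [TopologicalSpace K₂]
    [CompactSpace K₁] [CompactSpace K₂]
    {𝔠₁ : Set (Finset (Set K₁))} {𝔠₂ : Set (Finset (Set K₂))}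
    (h₁ : TopCofinal 𝔠₁) (h₂ : TopCofinal 𝔠₂)
    (U : Set (Set (K₁ × K₂))) (hUo : ∀ u ∈ U, IsOpen u) (hUc : ⋃₀ U = Set.univ) :
    ∃ A ∈ 𝔠₁, ∃ B ∈ 𝔠₂, RefinesFam (prodCover A B) U := by
  classical
  have hz : ∀ z : K₁ × K₂, ∃ u, u ∈ U ∧ ∃ v w, IsOpen v ∧ IsOpen w ∧
      z.1 ∈ v ∧ z.2 ∈ w ∧ v ×ˢ w ⊆ u := by
    intro z
    have : z ∈ ⋃₀ U := hUc ▸ Set.mem_univ z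
    obtain ⟨u, huU, hzu⟩ := this
    obtain ⟨v, w, hv, hw, h1, h2, hsub⟩ := (isOpen_prod_iff.mp (hUo u huU)) z.1 z.2 hzu
    exact ⟨u, huU, v, w, hv, hw, h1, h2, hsub⟩
  choose u huU v w hv hw hzv hzw hsub using hz
  have hcov : Set.univ ⊆ ⋃ z : K₁ × K₂, v z ×ˢ w z := fun z _ =>
    Set.mem_iUnion.mpr ⟨z, hzv z, hzw z⟩
  obtain ⟨t, ht⟩ := isCompact_univ.elim_finite_subcover (fun z => v z ×ˢ w z)
    (fun z => (hv z).prod (hw z)) hcov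
  set V : K₁ → Set K₁ := fun x => ⋂ z ∈ t.filter (fun z => x ∈ v z), v z with hV
  set W : K₂ → Set K₂ := fun y => ⋂ z ∈ t.filter (fun z => y ∈ w z), w z with hW
  have hVx : ∀ x, x ∈ V x := by
    intro x
    apply Set.mem_iInter₂.mpr
    intro z hz
    exact (Finset.mem_filter.mp hz).2
  have hWy : ∀ y, y ∈ W y := by
    intro y
    apply Set.mem_iInter₂.mpr
    intro z hz
    exact (Finset.mem_filter.mp hz).2
  obtain ⟨A, hA𝔠, hA⟩ := h₁.2 (Set.range V)
    (by rintro _ ⟨x, rfl⟩; exact isOpen_biInter_finset fun z hz => hv z)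
    (Set.eq_univ_of_forall fun x => ⟨V x, ⟨x, rfl⟩, hVx x⟩)
  obtain ⟨B, hB𝔠, hB⟩ := h₂.2 (Set.range W)
    (by rintro _ ⟨y, rfl⟩; exact isOpen_biInter_finset fun z hz => hw z)
    (Set.eq_univ_of_forall fun y => ⟨W y, ⟨y, rfl⟩, hWy y⟩)
  refine ⟨A, hA𝔠, B, hB𝔠, ?_⟩
  intro c hc
  obtain ⟨a, ha, b, hb, rfl⟩ := mem_prodCover.mp hc
  obtain ⟨_, ⟨x, rfl⟩, haV⟩ := hA a ha
  obtain ⟨_, ⟨y, rfl⟩, hbW⟩ := hB b hb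
  have hxy : (x, y) ∈ ⋃ z ∈ t, v z ×ˢ w z := ht (Set.mem_univ _)
  simp only [Set.mem_iUnion, Set.mem_prod, exists_prop] at hxy
  obtain ⟨z, hzt, hxz, hyz⟩ := hxy
  refine ⟨u z, huU z, ?_⟩
  have hVv : V x ⊆ v z :=
    Set.biInter_subset_of_mem (Finset.mem_filter.mpr ⟨hzt, hxz⟩)
  have hWw : W y ⊆ w z :=
    Set.biInter_subset_of_mem (Finset.mem_filter.mpr ⟨hzt, hyz⟩)
  exact (Set.prod_mono (haV.trans hVv) (hbW.trans hWw)).trans (hsub z)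

end FreeDimProd

/-- Free dimension is subadditive with respect to products. -/
theorem stmt3 (K₁ K₂ : Type*) [TopologicalSpace K₁] [TopologicalSpace K₂]
    [CompactSpace K₁] [CompactSpace K₂] [T2Space K₁] [T2Space K₂]
    (d₁ d₂ : ℕ) (h₁ : FreeDimLE K₁ d₁) (h₂ : FreeDimLE K₂ d₂) :
    FreeDimLE (K₁ × K₂) (d₁ + d₂) := by
  classical
  obtain ⟨𝔠₁, M₁, χ₁, hM₁, hc₁, href₁⟩ := h₁
  obtain ⟨𝔠₂, M₂, χ₂, hM₂, hc₂, href₂⟩ := h₂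
  set 𝔠 : Set (Finset (Set (K₁ × K₂))) :=
    {C | ∃ A ∈ 𝔠₁, ∃ B ∈ 𝔠₂, C = FreeDimProd.prodCover A B} with h𝔠
  have hsel : ∀ C : Finset (Set (K₁ × K₂)), ∃ A B, C ∈ 𝔠 →
      A ∈ 𝔠₁ ∧ B ∈ 𝔠₂ ∧ C = FreeDimProd.prodCover A B := by
    intro C
    by_cases hC : C ∈ 𝔠
    · obtain ⟨A, hA, B, hB, hCe⟩ := hC
      exact ⟨A, B, fun _ => ⟨hA, hB, hCe⟩⟩
    · exact ⟨∅, ∅, fun h => absurd h hC⟩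
  choose Af Bf hAB using hsel
  refine ⟨𝔠, M₁ * M₂, fun C => χ₁ (Af C) + χ₂ (Bf C), Nat.mul_pos hM₁ hM₂, ⟨?_, ?_⟩, ?_⟩
  · rintro C ⟨A, hA, B, hB, rfl⟩
    exact FreeDimProd.isFCC_prodCover (hc₁.1 A hA) (hc₂.1 B hB)
  · intro U hUo hUc
    obtain ⟨A, hA, B, hB, hRef⟩ := FreeDimProd.prod_cofinal hc₁ hc₂ U hUo hUc
    exact ⟨FreeDimProd.prodCover A B, ⟨A, hA, B, hB, rfl⟩, hRef⟩
  · intro k f hf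
    have hABf := fun i => hAB (f i) (hf i)
    obtain ⟨C, hCfcc, hCref, hCcard⟩ := href₁ k (fun i => Af (f i)) (fun i => (hABf i).1)
    obtain ⟨D, hDfcc, hDref, hDcard⟩ := href₂ k (fun i => Bf (f i)) (fun i => (hABf i).2.1)
    refine ⟨FreeDimProd.prodCover C D, FreeDimProd.isFCC_prodCover hCfcc hDfcc, ?_, ?_⟩
    · intro i
      rw [(hABf i).2.2]
      exact FreeDimProd.refines_prodCover (hCref i) (hDref i)
    · calc (FreeDimProd.prodCover C D).card ≤ C.card * D.card :=
            FreeDimProd.card_prodCover C D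
        _ ≤ (M₁ * (∑ i, χ₁ (Af (f i))) ^ d₁) * (M₂ * (∑ i, χ₂ (Bf (f i))) ^ d₂) :=
            Nat.mul_le_mul hCcard hDcard
        _ ≤ M₁ * M₂ * (∑ i, (χ₁ (Af (f i)) + χ₂ (Bf (f i)))) ^ (d₁ + d₂) := by
            rw [Finset.sum_add_distrib, pow_add]
            calc (M₁ * (∑ i, χ₁ (Af (f i))) ^ d₁) * (M₂ * (∑ i, χ₂ (Bf (f i))) ^ d₂)
                = M₁ * M₂ * ((∑ i, χ₁ (Af (f i))) ^ d₁ * (∑ i, χ₂ (Bf (f i))) ^ d₂) := by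
                  ring
              _ ≤ M₁ * M₂ *
                  ((∑ i, χ₁ (Af (f i)) + ∑ i, χ₂ (Bf (f i))) ^ d₁ *
                   (∑ i, χ₁ (Af (f i)) + ∑ i, χ₂ (Bf (f i))) ^ d₂) :=
                Nat.mul_le_mul_left _ (Nat.mul_le_mul
                  (Nat.pow_le_pow_left (Nat.le_add_right _ _) _)
                  (Nat.pow_le_pow_left (Nat.le_add_left _ _) _))
end

section
/- If K is a compact Hausdorff space with free dimension at most d and L ⊆ K is a closed subspace, then L (with the subspace topology) has free dimension at most d. -/
/-- Free dimension is not increased by passing to closed subspaces. -/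
theorem stmt7 (K : Type*) [TopologicalSpace K] [CompactSpace K] [T2Space K]
    (d : ℕ) (hK : FreeDimLE K d) (L : Set K) (hL : IsClosed L) :
    FreeDimLE L d := by
  classical
  obtain ⟨𝔠, M, χ, hM, ⟨hFCC, hcof⟩, hjoint⟩ := hK
  -- restriction map on covers
  set r : Finset (Set K) → Finset (Set L) :=
    fun C => (C.image (fun c => (Subtype.val ⁻¹' c : Set L))).filter (fun s => s.Nonempty)
    with hr
  have hmem : ∀ (C : Finset (Set K)) (s : Set L),
      s ∈ r C ↔ (∃ c ∈ C, (Subtype.val ⁻¹' c : Set L) = s) ∧ s.Nonempty := by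
    intro C s
    simp [hr, Finset.mem_filter, Finset.mem_image]
  have hrFCC : ∀ C ∈ 𝔠, IsFCC (r C) := by
    intro C hC
    constructor
    · intro s hs
      obtain ⟨⟨c, hc, rfl⟩, -⟩ := (hmem C s).1 hs
      exact ((hFCC C hC).1 c hc).preimage continuous_subtype_val
    · apply Set.eq_univ_iff_forall.mpr
      intro x
      have hx : (x : K) ∈ ⋃₀ (↑C : Set (Set K)) := by
        rw [(hFCC C hC).2]; trivial
      obtain ⟨c, hc, hxc⟩ := hx
      refine ⟨(Subtype.val ⁻¹' c : Set L), ?_, hxc⟩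
      exact (hmem C _).2 ⟨⟨c, hc, rfl⟩, ⟨x, hxc⟩⟩
  refine ⟨r '' 𝔠, M,
    fun D => if h : ∃ C, C ∈ 𝔠 ∧ r C = D then χ h.choose else 0, hM, ⟨?_, ?_⟩, ?_⟩
  · rintro D ⟨C, hC, rfl⟩
    exact hrFCC C hC
  · -- cofinality
    intro U hUopen hUcov
    set V : Set (Set K) := {Lᶜ} ∪ {v | IsOpen v ∧ (Subtype.val ⁻¹' v : Set L) ∈ U} with hV
    have hVopen : ∀ v ∈ V, IsOpen v := by
      rintro v (rfl | ⟨hvo, -⟩)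
      · exact hL.isOpen_compl
      · exact hvo
    have hVcov : ⋃₀ V = Set.univ := by
      apply Set.eq_univ_iff_forall.mpr
      intro x
      by_cases hx : x ∈ L
      · have : (⟨x, hx⟩ : L) ∈ ⋃₀ U := by rw [hUcov]; trivial
        obtain ⟨u, hu, hxu⟩ := this
        obtain ⟨v, hvo, hvu⟩ := isOpen_induced_iff.1 (hUopen u hu)
        refine ⟨v, Or.inr ⟨hvo, by rw [hvu]; exact hu⟩, ?_⟩
        have : (⟨x, hx⟩ : L) ∈ (Subtype.val ⁻¹' v : Set L) := by rw [hvu]; exact hxu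
        exact this
      · exact ⟨Lᶜ, Or.inl rfl, hx⟩
    obtain ⟨C, hC, hCref⟩ := hcof V hVopen hVcov
    refine ⟨r C, ⟨C, hC, rfl⟩, ?_⟩
    intro s hs
    obtain ⟨⟨c, hc, rfl⟩, hne⟩ := (hmem C s).1 hs
    obtain ⟨w, hw, hcw⟩ := hCref c hc
    rcases hw with rfl | ⟨-, hwU⟩
    · exfalso
      obtain ⟨y, hy⟩ := hne
      exact (hcw hy) y.2
    · exact ⟨Subtype.val ⁻¹' w, hwU, fun y hy => hcw hy⟩
  · -- joint refinements
    intro k f hf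
    have hch : ∀ i, ∃ C, C ∈ 𝔠 ∧ r C = f i := by
      intro i
      obtain ⟨C, hC, hCf⟩ := hf i
      exact ⟨C, hC, hCf⟩
    set g : Fin k → Finset (Set K) := fun i => (hch i).choose with hg
    have hg𝔠 : ∀ i, g i ∈ 𝔠 := fun i => (hch i).choose_spec.1
    have hgr : ∀ i, r (g i) = f i := fun i => (hch i).choose_spec.2
    obtain ⟨C, hCFCC, hCref, hCcard⟩ := hjoint k g hg𝔠
    refine ⟨r C, ?_, ?_, ?_⟩
    · constructor
      · intro s hs
        obtain ⟨⟨c, hc, rfl⟩, -⟩ := (hmem C s).1 hs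
        exact (hCFCC.1 c hc).preimage continuous_subtype_val
      · apply Set.eq_univ_iff_forall.mpr
        intro x
        have hx : (x : K) ∈ ⋃₀ (↑C : Set (Set K)) := by rw [hCFCC.2]; trivial
        obtain ⟨c, hc, hxc⟩ := hx
        exact ⟨(Subtype.val ⁻¹' c : Set L), (hmem C _).2 ⟨⟨c, hc, rfl⟩, ⟨x, hxc⟩⟩, hxc⟩
    · intro i s hs
      obtain ⟨⟨c, hc, rfl⟩, hne⟩ := (hmem C s).1 hs
      obtain ⟨c', hc', hcc'⟩ := hCref i c hc
      refine ⟨(Subtype.val ⁻¹' c' : Set L), ?_, fun y hy => hcc' hy⟩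
      rw [← hgr i]
      refine (hmem (g i) _).2 ⟨⟨c', hc', rfl⟩, ?_⟩
      obtain ⟨y, hy⟩ := hne
      exact ⟨y, hcc' hy⟩
    · calc (r C).card ≤ (C.image (fun c => (Subtype.val ⁻¹' c : Set L))).card :=
            Finset.card_filter_le _ _
        _ ≤ C.card := Finset.card_image_le
        _ ≤ M * (∑ i, χ (g i)) ^ d := hCcard
        _ = M * (∑ i, (if h : ∃ C, C ∈ 𝔠 ∧ r C = f i then χ h.choose else 0)) ^ d := by
            congr 2
            apply Finset.sum_congr rfl
            intro i _
            rw [dif_pos (hch i)]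
end

section
/- Let K be a nonmetrizable compact Hausdorff space. Then there exists an uncountable family 𝓕 of continuous functions K → [0,1] such that for every uncountable 𝓕' ⊆ 𝓕 and every infinite 𝓕'' ⊆ 𝓕', for every natural number n there exist f1,...,fn ∈ 𝓕'' and points x1,...,x_{n+1} ∈ K such that for all 1 ≤ j < j' ≤ n+1 there is k ≤ n with |f_k(x_j) − f_k(x_{j'})| ≥ 1/2. -/
/-!
A compact Hausdorff space on which countably many continuous real functions separate points
embeds in `ℝ^ℕ`, so on the nonmetrizable `K` every countable family of functions identifies two
distinct points. Transfinite recursion along `ω₁` (Urysohn at each step) therefore produces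
`f_i : K → [0,1]` and points `x_i, y_i` with `f_i x_i = 0`, `f_i y_i = 1` and `f_j x_i = f_j y_i`
for `j < i`; the `f_i` are pairwise distinct, hence uncountably many. Given infinitely many of
them, pick increasing indices `a 0 < a 1 < ⋯` such that for each `m` the values `f_{a m} x_{a n}`,
`n > m`, all lie on the same side of `1/2`, and let `z_m` be the one of `x_{a m}, y_{a m}` whose
value `0` or `1` lies on the other side. Since `f_{a m}` does not distinguish `x_{a n}` from
`y_{a n}`, it separates `z_m` from every later `z_n` by at least `1/2`.
-/

open Set TopologicalSpace Cardinal

theorem metrizableSpace_of_injective_pi {K ι : Type*} [TopologicalSpace K] [CompactSpace K]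
    [Countable ι] (f : ι → C(K, ℝ)) (hf : Function.Injective fun x i => f i x) :
    MetrizableSpace K :=
  ((continuous_pi fun i => (f i).continuous).isClosedEmbedding hf).isEmbedding.metrizableSpace

theorem Set.Infinite.exists_infinite_sep_iff {α : Type*} {B : Set α} (hB : B.Infinite)
    (p : α → Prop) : ∃ q : Prop, {b ∈ B | p b ↔ q}.Infinite := by
  by_cases h : {b ∈ B | p b}.Infinite
  · exact ⟨True, by simpa using h⟩
  · refine ⟨False, ?_⟩
    simp only [iff_false]
    exact Infinite.mono (fun b hb => ⟨hb.1, fun hp => hb.2 ⟨hb.1, hp⟩⟩)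
      (hB.sdiff (not_infinite.1 h))

theorem Set.Infinite.exists_strictMono_endHomogeneous {ι : Type*} [LinearOrder ι]
    [WellFoundedLT ι] {A : Set ι} (hA : A.Infinite) (c : ι → ι → Prop) :
    ∃ a : ℕ → ι, StrictMono a ∧ (∀ n, a n ∈ A) ∧
      ∃ s : ℕ → Prop, ∀ m n, m < n → (c (a m) (a n) ↔ s m) := by
  have step : ∀ B : {B : Set ι // B.Infinite}, ∃ a ∈ B.1, ∃ q : Prop,
      ∃ B' : {B : Set ι // B.Infinite}, B'.1 ⊆ {b ∈ B.1 | a < b ∧ (c a b ↔ q)} := by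
    rintro ⟨B, hB⟩
    set a := wellFounded_lt.min B hB.nonempty
    obtain ⟨q, hq⟩ := (hB.sdiff (finite_singleton a)).exists_infinite_sep_iff (c a)
    refine ⟨a, wellFounded_lt.min_mem B _, q, ⟨_, hq⟩, fun b ⟨⟨hb, hba⟩, hcq⟩ => ⟨hb, ?_, hcq⟩⟩
    exact lt_of_le_of_ne (not_lt.1 (wellFounded_lt.not_lt_min B hb)) (Ne.symm hba)
  choose a ha q B' hB' using step
  set S : ℕ → {B : Set ι // B.Infinite} := fun n => B'^[n] ⟨A, hA⟩
  have hS_succ : ∀ n, (S (n + 1)).1 ⊆ {b ∈ (S n).1 | a (S n) < b ∧ (c (a (S n)) b ↔ q (S n))} :=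
    fun n => by simpa only [S, Function.iterate_succ_apply'] using hB' (S n)
  have hS_anti : Antitone fun n => (S n).1 :=
    antitone_nat_of_succ_le fun n b hb => (hS_succ n hb).1
  have hS_lt : ∀ m n, m < n →
      a (S n) ∈ {b ∈ (S m).1 | a (S m) < b ∧ (c (a (S m)) b ↔ q (S m))} :=
    fun m n hmn => hS_succ m (hS_anti (Nat.succ_le_of_lt hmn) (ha (S n)))
  exact ⟨fun n => a (S n), fun m n hmn => (hS_lt m n hmn).2.1,
    fun n => hS_anti (Nat.zero_le n) (ha (S n)), fun n => q (S n),
    fun m n hmn => (hS_lt m n hmn).2.2⟩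

section TriangularSystem

variable {ι K : Type*} [TopologicalSpace K]

theorem exists_urysohn_pair_of_not_metrizableSpace [CompactSpace K] [T2Space K]
    (hK : ¬ MetrizableSpace K) [Countable ι] (g : ι → C(K, ℝ)) :
    ∃ (f : C(K, ℝ)) (x y : K), f x = 0 ∧ f y = 1 ∧ (∀ z, f z ∈ Icc (0 : ℝ) 1) ∧
      ∀ i, g i x = g i y := by
  obtain ⟨x, y, hxy, hg⟩ : ∃ x y, x ≠ y ∧ ∀ i, g i x = g i y := by
    by_contra! h
    refine hK (metrizableSpace_of_injective_pi g fun x y hxy => by_contra fun hne => ?_)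
    obtain ⟨i, hi⟩ := h x y hne
    exact hi (congrFun hxy i)
  obtain ⟨f, hfx, hfy, hf⟩ := exists_continuous_zero_one_of_isClosed isClosed_singleton
    isClosed_singleton (disjoint_singleton.2 hxy)
  exact ⟨f, x, y, hfx rfl, hfy rfl, hf, hg⟩

structure IsTriangularSystem [LT ι] (f : ι → C(K, ℝ)) (x y : ι → K) : Prop where
  apply_left : ∀ i, f i (x i) = 0
  apply_right : ∀ i, f i (y i) = 1
  mem_Icc : ∀ i z, f i z ∈ Icc (0 : ℝ) 1
  apply_left_eq_apply_right : ∀ {j i : ι}, j < i → f j (x i) = f j (y i)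

theorem exists_isTriangularSystem [CompactSpace K] [T2Space K] (hK : ¬ MetrizableSpace K)
    [LinearOrder ι] [WellFoundedLT ι] (hι : ∀ i : ι, (Iio i).Countable) :
    ∃ (f : ι → C(K, ℝ)) (x y : ι → K), IsTriangularSystem f x y := by
  have step : ∀ (i : ι) (prev : ∀ j, j < i → C(K, ℝ) × K × K), ∃ p : C(K, ℝ) × K × K,
      p.1 p.2.1 = 0 ∧ p.1 p.2.2 = 1 ∧ (∀ z, p.1 z ∈ Icc (0 : ℝ) 1) ∧
        ∀ j (hj : j < i), (prev j hj).1 p.2.1 = (prev j hj).1 p.2.2 := by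
    intro i prev
    have := (hι i).to_subtype
    obtain ⟨f, x, y, hfx, hfy, hf, heq⟩ :=
      exists_urysohn_pair_of_not_metrizableSpace hK fun j : Iio i => (prev j j.2).1
    exact ⟨(f, x, y), hfx, hfy, hf, fun j hj => heq ⟨j, hj⟩⟩
  choose p hp using step
  set g : ι → C(K, ℝ) × K × K := wellFounded_lt.fix p
  have hg : ∀ i, g i = p i fun j _ => g j := wellFounded_lt.fix_eq p
  refine ⟨fun i => (g i).1, fun i => (g i).2.1, fun i => (g i).2.2, ⟨fun i => ?_, fun i => ?_,
    fun i => ?_, @fun j i hji => ?_⟩⟩ <;> rw [hg i]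
  exacts [(hp i _).1, (hp i _).2.1, (hp i _).2.2.1, (hp i fun j _ => g j).2.2.2 j hji]

namespace IsTriangularSystem

variable {f : ι → C(K, ℝ)} {x y : ι → K}

theorem injective [LinearOrder ι] (h : IsTriangularSystem f x y) : Function.Injective f :=
  Function.Injective.of_lt_imp_ne fun j i hji hf => by
    simpa [hf, h.apply_left, h.apply_right] using h.apply_left_eq_apply_right hji

theorem exists_seq_half_separated [LinearOrder ι] [WellFoundedLT ι]
    (h : IsTriangularSystem f x y) {A : Set ι} (hA : A.Infinite) :
    ∃ a : ℕ → ι, (∀ n, a n ∈ A) ∧ ∃ z : ℕ → K,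
      ∀ m n, m < n → 1 / 2 ≤ |f (a m) (z m) - f (a m) (z n)| := by
  classical
  obtain ⟨a, ha_mono, haA, s, hs⟩ :=
    hA.exists_strictMono_endHomogeneous fun j i => 1 / 2 ≤ f j (x i)
  refine ⟨a, haA, fun n => if s n then x (a n) else y (a n), fun m n hmn => ?_⟩
  dsimp only
  have hz : f (a m) (if s n then x (a n) else y (a n)) = f (a m) (x (a n)) := by
    split_ifs
    exacts [rfl, (h.apply_left_eq_apply_right (ha_mono hmn)).symm]
  have hv := h.mem_Icc (a m) (x (a n))
  rw [hz]
  by_cases hsm : s m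
  · rw [if_pos hsm, h.apply_left, zero_sub, abs_neg, abs_of_nonneg hv.1]
    exact (hs m n hmn).2 hsm
  · rw [if_neg hsm, h.apply_right, abs_of_nonneg (by linarith [hv.2])]
    linarith [mt (hs m n hmn).1 hsm]

end IsTriangularSystem

end TriangularSystem

/-- For every nonmetrizable compact Hausdorff space `K` there is an uncountable family
`𝓕` of continuous functions `K → [0,1]` such that for every uncountable `𝓕' ⊆ 𝓕` and
every infinite `𝓕'' ⊆ 𝓕'`, for every `n` there are `f₁, …, fₙ ∈ 𝓕''` and points
`x₁, …, x_{n+1} ∈ K` such that any two distinct points are `1/2`-separated by some `f_k`. -/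
theorem stmt9 (K : Type*) [TopologicalSpace K] [CompactSpace K] [T2Space K]
    (hK : ¬ TopologicalSpace.MetrizableSpace K) :
    ∃ 𝓕 : Set C(K, ℝ),
      ¬ 𝓕.Countable ∧
      (∀ f ∈ 𝓕, ∀ x : K, f x ∈ Set.Icc (0 : ℝ) 1) ∧
      ∀ 𝓕' ⊆ 𝓕, ¬ 𝓕'.Countable →
        ∀ 𝓕'' ⊆ 𝓕', 𝓕''.Infinite →
          ∀ n : ℕ, ∃ f : Fin n → C(K, ℝ), (∀ k, f k ∈ 𝓕'') ∧
            ∃ x : Fin (n + 1) → K,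
              ∀ j j' : Fin (n + 1), j < j' →
                ∃ k : Fin n, (1 : ℝ) / 2 ≤ |f k (x j) - f k (x j')| := by
  let ι := (ℵ₁ : Cardinal.{0}).ord.ToType
  have hι : ∀ i : ι, (Iio i).Countable := fun i => le_aleph0_iff_set_countable.1
    (lt_aleph_one_iff.1 ((mk_Iio_lt i (by simp [ι])).trans_eq (by simp [ι])))
  have : Uncountable ι := aleph0_lt_mk_iff.1 (by simp [ι])
  obtain ⟨f, x, y, hf⟩ := exists_isTriangularSystem hK hι
  refine ⟨range f, fun hcount => ?_, ?_, ?_⟩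
  · exact not_countable (countable_univ_iff.1 (preimage_range f ▸ hcount.preimage hf.injective))
  · rintro _ ⟨i, rfl⟩
    exact hf.mem_Icc i
  · intro 𝓕' h𝓕' _ 𝓕'' h𝓕'' hinf n
    obtain ⟨a, haA, z, hz⟩ :=
      hf.exists_seq_half_separated (hinf.preimage (h𝓕''.trans h𝓕'))
    exact ⟨fun k => f (a k), fun k => haA k, fun j => z j, fun j j' hjj' =>
      ⟨⟨j, by omega⟩, hz j j' hjj'⟩⟩
end

section
/- Let d ≥ 1, let K1,...,Kd be nonmetrizable compact Hausdorff spaces, and let K_{d+1} be an infinite compact Hausdorff space. Then the product K1 × K2 × ... × Kd × K_{d+1} does not have free dimension ≤ d (i.e., its free dimension is at least d+1). -/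
/-!
In a nonmetrizable compactum `Y` no countable family of continuous functions separates points,
so transfinite recursion along `ω₁` gives pairs `(x i, y i)` and Urysohn functions `f i` with
`f i (x i) = 0`, `f i (y i) = 1` and `f j (x i) = f j (y i)` for `j < i`. A cover `E i ∈ 𝔠` on
whose pieces `f i` oscillates by less than `1/2` cannot join `x i` or `y i` (whichever is far
from the common value) to the later pairs. As `ω₁` is uncountable, infinitely many `E i` have the
same weight `χ (E i) = m`, and an end-homogeneous Ramsey argument selects covers `D 0, D 1, …` of
weight `m` and points `P 0, P 1, …` with `D j` separating `P j` from every later `P l`; hence any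
common refinement of `k` of them separates `k` points. On the infinite factor a single cover
separates any prescribed `n` points.

A common refinement of `k` such covers for each of the `d` nonmetrizable factors and of the cover
for the last factor separates a grid of `k ^ d * n` points, so it has at least `k ^ d * n`
pieces. With `k` one more than the weight of the last cover, the total weight is at most
`k * (∑ m + 1)`, so free dimension `≤ d` bounds the number of pieces by
`M * (∑ m + 1) ^ d * k ^ d`, which is less than `k ^ d * n` once `n > M * (∑ m + 1) ^ d`.
-/

open Set TopologicalSpace

section Tower

variable {Y : Type*} [TopologicalSpace Y] [CompactSpace Y]

theorem metrizableSpace_of_countable_separating {S : Set C(Y, ℝ)} (hS : S.Countable)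
    (hsep : ∀ x y, x ≠ y → ∃ f ∈ S, f x ≠ f y) : MetrizableSpace Y := by
  have := hS.to_subtype
  refine (Continuous.isClosedEmbedding (f := fun x (f : S) => (f : C(Y, ℝ)) x)
    (by fun_prop) fun x y hxy => ?_).isEmbedding.metrizableSpace
  by_contra hne
  obtain ⟨f, hf, hfxy⟩ := hsep x y hne
  exact hfxy (congrFun hxy ⟨f, hf⟩)

variable [T2Space Y]

theorem exists_urysohn_of_countable_of_not_metrizableSpace (hY : ¬ MetrizableSpace Y)
    {S : Set C(Y, ℝ)} (hS : S.Countable) :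
    ∃ x y : Y, ∃ f : C(Y, ℝ), f x = 0 ∧ f y = 1 ∧ ∀ g ∈ S, g x = g y := by
  obtain ⟨x, y, hxy, hS⟩ : ∃ x y, x ≠ y ∧ ∀ g ∈ S, g x = g y := by
    by_contra! h
    exact hY (metrizableSpace_of_countable_separating hS h)
  obtain ⟨f, hfx, hfy, -⟩ := exists_continuous_zero_one_of_isClosed isClosed_singleton
    isClosed_singleton (disjoint_singleton.2 hxy)
  exact ⟨x, y, f, hfx rfl, hfy rfl, hS⟩

theorem exists_recursive_choice {ι β : Type*} [LinearOrder ι] [WellFoundedLT ι]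
    (P : ∀ i : ι, (Iio i → β) → β → Prop) (h : ∀ i g, ∃ b, P i g b) :
    ∃ F : ι → β, ∀ i, P i (fun j => F j) (F i) := by
  refine ⟨wellFounded_lt.fix fun i F => (h i fun j => F j j.2).choose, fun i => ?_⟩
  rw [wellFounded_lt.fix_eq]
  exact (h i _).choose_spec

theorem exists_tower_of_not_metrizableSpace {ι : Type*} [LinearOrder ι] [WellFoundedLT ι]
    (hι : ∀ i : ι, (Iio i).Countable) (hY : ¬ MetrizableSpace Y) :
    ∃ (x y : ι → Y) (f : ι → C(Y, ℝ)),
      (∀ i, f i (x i) = 0) ∧ (∀ i, f i (y i) = 1) ∧ ∀ i, ∀ j < i, f j (x i) = f j (y i) := by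
  obtain ⟨F, hF⟩ := exists_recursive_choice
    (fun i (g : Iio i → Y × Y × C(Y, ℝ)) t =>
      t.2.2 t.1 = 0 ∧ t.2.2 t.2.1 = 1 ∧ ∀ j, (g j).2.2 t.1 = (g j).2.2 t.2.1)
    fun i g => by
      have := (hι i).to_subtype
      obtain ⟨x, y, f, hx, hy, hS⟩ :=
        exists_urysohn_of_countable_of_not_metrizableSpace hY (countable_range fun j => (g j).2.2)
      exact ⟨(x, y, f), hx, hy, fun j => hS _ ⟨j, rfl⟩⟩
  exact ⟨fun i => (F i).1, fun i => (F i).2.1, fun i => (F i).2.2,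
    fun i => (hF i).1, fun i => (hF i).2.1, fun i j hj => (hF i).2.2 ⟨j, hj⟩⟩

end Tower

open Cardinal in
instance : Uncountable (ℵ₁ : Cardinal.{0}).ord.ToType := by
  rw [← aleph0_lt_mk_iff, mk_ord_toType]
  exact aleph0_lt_aleph_one

open Cardinal in
theorem countable_Iio_toType_ord_aleph_one (i : (ℵ₁ : Cardinal.{0}).ord.ToType) :
    (Iio i).Countable := by
  rw [← le_aleph0_iff_set_countable, ← lt_aleph_one_iff]
  simpa using mk_Iio_lt i (by simp)

theorem exists_strictMono_forall_or_forall_not {ι : Type*} [LinearOrder ι] [WellFoundedLT ι]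
    {A : Set ι} (hA : A.Infinite) (r : ι → ι → Prop) :
    ∃ a : ℕ → ι, StrictMono a ∧ (∀ n, a n ∈ A) ∧
      ∀ j, (∀ l, j < l → r (a j) (a l)) ∨ (∀ l, j < l → ¬ r (a j) (a l)) := by
  have step : ∀ S : Set ι, S.Infinite → ∃ a ∈ S, ∃ S' ⊆ S, S'.Infinite ∧ (∀ x ∈ S', a < x) ∧
      ((∀ x ∈ S', r a x) ∨ (∀ x ∈ S', ¬ r a x)) := by
    intro S hS
    obtain ⟨a, haS, hmin⟩ := wellFounded_lt.has_min S hS.nonempty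
    have hsplit : S \ {a} ⊆ {x ∈ S | a < x ∧ r a x} ∪ {x ∈ S | a < x ∧ ¬ r a x} := by
      rintro x ⟨hxS, hxa⟩
      have hax : a < x := lt_of_le_of_ne (not_lt.1 (hmin x hxS)) (Ne.symm hxa)
      by_cases hr : r a x
      exacts [Or.inl ⟨hxS, hax, hr⟩, Or.inr ⟨hxS, hax, hr⟩]
    rcases infinite_union.1 ((hS.sdiff (finite_singleton a)).mono hsplit) with h | h
    · exact ⟨a, haS, _, fun x hx => hx.1, h, fun x hx => hx.2.1, Or.inl fun x hx => hx.2.2⟩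
    · exact ⟨a, haS, _, fun x hx => hx.1, h, fun x hx => hx.2.1, Or.inr fun x hx => hx.2.2⟩
  have : Nonempty ι := ⟨hA.nonempty.some⟩
  choose! a haS next hnext_sub hnext_inf hlt hcol using step
  set S : ℕ → Set ι := fun n => next^[n] A
  have hS_succ (n : ℕ) : S (n + 1) = next (S n) := Function.iterate_succ_apply' _ _ _
  have hS_inf (n : ℕ) : (S n).Infinite := by
    induction n with
    | zero => exact hA
    | succ n ih => rw [hS_succ]; exact hnext_inf _ ih
  have hS_anti : Antitone S :=
    antitone_nat_of_succ_le fun n => hS_succ n ▸ hnext_sub _ (hS_inf n)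
  have hmem {j l : ℕ} (hjl : j < l) : a (S l) ∈ next (S j) :=
    hS_succ j ▸ hS_anti hjl (haS _ (hS_inf l))
  refine ⟨fun n => a (S n), strictMono_nat_of_lt_succ fun n => hlt _ (hS_inf n) _
    (hmem n.lt_succ_self), fun n => hS_anti n.zero_le (haS _ (hS_inf n)), fun j => ?_⟩
  exact (hcol _ (hS_inf j)).imp (fun h l hl => h _ (hmem hl)) fun h l hl => h _ (hmem hl)

def SeparatesAlong {X Y : Type*} (π : X → Y) (C : Finset (Set X)) (S : Set Y) : Prop :=
  ∀ c ∈ C, (S ∩ π '' c).Subsingleton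

theorem SeparatesAlong.of_refines {X Y : Type*} {π : X → Y} {C D : Finset (Set X)} {S : Set Y}
    (hD : SeparatesAlong π D S) (hCD : Refines C D) : SeparatesAlong π C S := by
  intro c hc
  obtain ⟨c', hc', hcc'⟩ := hCD c hc
  exact (hD c' hc').anti (inter_subset_inter_right _ (image_mono hcc'))

theorem exists_finset_separatesAlong_of_pairwise {X Y : Type*} {π : X → Y}
    {D : ℕ → Finset (Set X)} {P : ℕ → Y}
    (hP : ∀ j l, j < l → P j ≠ P l ∧ SeparatesAlong π (D j) {P j, P l})
    {k : ℕ} {C : Finset (Set X)} (hC : ∀ j < k, Refines C (D j)) :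
    ∃ F : Finset Y, F.card = k ∧ SeparatesAlong π C F := by
  classical
  have hsep {j l : ℕ} (hjl : j < l) (hlk : l < k) : SeparatesAlong π C {P j, P l} :=
    (hP j l hjl).2.of_refines (hC j (hjl.trans hlk))
  refine ⟨(Finset.range k).image P, ?_, fun c hc => ?_⟩
  · have hinj : Function.Injective P := .of_lt_imp_ne fun j l h => (hP j l h).1
    rw [Finset.card_image_of_injective _ hinj, Finset.card_range]
  · rintro _ ⟨hu, huc⟩ _ ⟨hv, hvc⟩
    obtain ⟨j, hj, rfl⟩ := Finset.mem_image.1 hu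
    obtain ⟨l, hl, rfl⟩ := Finset.mem_image.1 hv
    rw [Finset.mem_range] at hj hl
    rcases lt_trichotomy j l with hjl | rfl | hlj
    · exact hsep hjl hl c hc ⟨mem_insert _ _, huc⟩ ⟨mem_insert_of_mem _ rfl, hvc⟩
    · rfl
    · exact hsep hlj hj c hc ⟨mem_insert_of_mem _ rfl, huc⟩ ⟨mem_insert _ _, hvc⟩

theorem prod_card_le_card_of_separatesAlong {ι : Type*} [Fintype ι] {X : ι → Type*}
    {C : Finset (Set (∀ i, X i))} (hC : ⋃₀ (C : Set (Set (∀ i, X i))) = univ)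
    (F : ∀ i, Finset (X i)) (hF : ∀ i, SeparatesAlong (Function.eval i) C (F i)) :
    ∏ i, (F i).card ≤ C.card := by
  classical
  choose g hgC hg using sUnion_eq_univ_iff.1 hC
  rw [← Fintype.card_piFinset]
  refine Finset.card_le_card_of_injOn g (fun z _ => hgC z) fun z hz w hw hzw => funext fun i =>
    hF i (g z) (hgC z) ⟨Fintype.mem_piFinset.1 hz i, z, hg z, rfl⟩
      ⟨Fintype.mem_piFinset.1 hw i, w, hzw ▸ hg w, rfl⟩

section Covers

variable {X Y Z : Type*} [TopologicalSpace X] [TopologicalSpace Y] [TopologicalSpace Z]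
  {𝔠 : Set (Finset (Set X))} {π : X → Y}

theorem TopCofinal.exists_mem_forall_image_subset (h𝔠 : TopCofinal 𝔠) {g : X → Z}
    (hg : Continuous g) {𝒱 : Set (Set Z)} (hopen : ∀ V ∈ 𝒱, IsOpen V) (hcover : ⋃₀ 𝒱 = univ) :
    ∃ D ∈ 𝔠, ∀ c ∈ D, ∃ V ∈ 𝒱, g '' c ⊆ V := by
  obtain ⟨D, hD, hDref⟩ := h𝔠.2 (preimage g '' 𝒱) (by
    rintro _ ⟨V, hV, rfl⟩
    exact (hopen V hV).preimage hg) (by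
    rw [sUnion_image, ← preimage_iUnion₂, ← sUnion_eq_biUnion, hcover, preimage_univ])
  refine ⟨D, hD, fun c hc => ?_⟩
  obtain ⟨_, ⟨V, hV, rfl⟩, hcV⟩ := hDref c hc
  exact ⟨V, hV, image_subset_iff.2 hcV⟩

theorem TopCofinal.exists_mem_separatesAlong_of_finite [T1Space Y] (h𝔠 : TopCofinal 𝔠)
    (hπ : Continuous π) {S : Set Y} (hS : S.Finite) : ∃ D ∈ 𝔠, SeparatesAlong π D S := by
  obtain ⟨D, hD, hDV⟩ := h𝔠.exists_mem_forall_image_subset hπ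
    (𝒱 := {V | IsOpen V ∧ (S ∩ V).Subsingleton}) (fun V hV => hV.1) (by
      refine eq_univ_of_forall fun y => ⟨(S \ {y})ᶜ, ⟨(hS.sdiff.isClosed).isOpen_compl, ?_⟩, ?_⟩
      · rintro u ⟨huS, hu⟩ v ⟨hvS, hv⟩
        simp only [mem_compl_iff, mem_sdiff, mem_singleton_iff, not_and, not_not] at hu hv
        rw [hu huS, hv hvS]
      · simp)
  refine ⟨D, hD, fun c hc => ?_⟩
  obtain ⟨V, hV, hcV⟩ := hDV c hc
  exact hV.2.anti (inter_subset_inter_right _ hcV)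

theorem TopCofinal.exists_mem_separatesAlong_of_half_le_dist (h𝔠 : TopCofinal 𝔠)
    (hπ : Continuous π) (f : C(Y, ℝ)) :
    ∃ D ∈ 𝔠, ∀ u v, 1 / 2 ≤ dist (f u) (f v) → SeparatesAlong π D {u, v} := by
  obtain ⟨D, hD, hDV⟩ := h𝔠.exists_mem_forall_image_subset (f.continuous.comp hπ)
    (𝒱 := range fun t => Metric.ball t (1 / 4)) (by
      rintro _ ⟨t, rfl⟩
      exact Metric.isOpen_ball)
    (eq_univ_of_forall fun s => ⟨_, ⟨s, rfl⟩, Metric.mem_ball_self (by norm_num)⟩)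
  refine ⟨D, hD, fun u v huv c hc => ?_⟩
  obtain ⟨_, ⟨t, rfl⟩, hct⟩ := hDV c hc
  have hclose : ∀ w ∈ π '' c, ∀ w' ∈ π '' c, dist (f w) (f w') < 1 / 2 := by
    rintro _ ⟨z, hz, rfl⟩ _ ⟨z', hz', rfl⟩
    have h := hct ⟨z, hz, rfl⟩
    have h' := hct ⟨z', hz', rfl⟩
    simp only [Function.comp_apply, Metric.mem_ball] at h h'
    linarith [dist_triangle_right (f (π z)) (f (π z')) t]
  rintro w ⟨hw, hwc⟩ w' ⟨hw', hw'c⟩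
  rcases hw with rfl | rfl <;> rcases hw' with rfl | rfl
  · rfl
  · exact absurd (hclose _ hwc _ hw'c) huv.not_gt
  · exact absurd (hclose _ hw'c _ hwc) huv.not_gt
  · rfl

theorem TopCofinal.exists_seq_separatesAlong_of_not_metrizableSpace [CompactSpace Y] [T2Space Y]
    (hY : ¬ MetrizableSpace Y) (h𝔠 : TopCofinal 𝔠) (hπ : Continuous π)
    (χ : Finset (Set X) → ℕ) :
    ∃ (m : ℕ) (D : ℕ → Finset (Set X)) (P : ℕ → Y), (∀ j, D j ∈ 𝔠 ∧ χ (D j) = m) ∧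
      ∀ j l, j < l → P j ≠ P l ∧ SeparatesAlong π (D j) {P j, P l} := by
  classical
  obtain ⟨x, y, f, hfx, hfy, hfxy⟩ :=
    exists_tower_of_not_metrizableSpace countable_Iio_toType_ord_aleph_one hY
  choose E hE𝔠 hEsep using fun i => h𝔠.exists_mem_separatesAlong_of_half_le_dist hπ (f i)
  obtain ⟨m, hm⟩ := Cardinal.exists_infinite_fiber (χ ∘ E) (by simp)
  obtain ⟨a, ha_mono, ha_mem, ha_hom⟩ := exists_strictMono_forall_or_forall_not
    (infinite_coe_iff.1 hm) fun i i' => 1 / 2 ≤ f i (x i')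
  let P : ℕ → Y := fun j => if ∀ l, j < l → 1 / 2 ≤ f (a j) (x (a l)) then x (a j) else y (a j)
  have hP_later {j l : ℕ} (hjl : j < l) : f (a j) (P l) = f (a j) (x (a l)) := by
    by_cases h : ∀ l', l < l' → 1 / 2 ≤ f (a l) (x (a l'))
    · simp only [P, if_pos h]
    · simp only [P, if_neg h, hfxy _ _ (ha_mono hjl)]
  have hP_gap {j l : ℕ} (hjl : j < l) : 1 / 2 ≤ dist (f (a j) (P j)) (f (a j) (P l)) := by
    rw [hP_later hjl, Real.dist_eq]
    by_cases h : ∀ l', j < l' → 1 / 2 ≤ f (a j) (x (a l'))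
    · simp only [P, if_pos h, hfx, zero_sub, abs_neg]
      exact (h l hjl).trans (le_abs_self _)
    · have h' := (ha_hom j).resolve_left h l hjl
      simp only [P, if_neg h, hfy]
      exact le_abs.2 (Or.inl (by linarith))
  refine ⟨m, fun j => E (a j), P, fun j => ⟨hE𝔠 _, ha_mem j⟩,
    fun j l hjl => ⟨fun h => ?_, hEsep _ _ _ (hP_gap hjl)⟩⟩
  have := hP_gap hjl
  rw [h, dist_self] at this
  norm_num at this

end Covers

theorem exists_refines_of_fintype {X : Type*} [TopologicalSpace X] {𝔠 : Set (Finset (Set X))}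
    {M d : ℕ} {χ : Finset (Set X) → ℕ}
    (hjoint : ∀ (k : ℕ) (f : Fin k → Finset (Set X)), (∀ i, f i ∈ 𝔠) →
      ∃ C : Finset (Set X), IsFCC C ∧ (∀ i, Refines C (f i)) ∧ C.card ≤ M * (∑ i, χ (f i)) ^ d)
    {ι : Type*} [Fintype ι] (f : ι → Finset (Set X)) (hf : ∀ i, f i ∈ 𝔠) :
    ∃ C : Finset (Set X), IsFCC C ∧ (∀ i, Refines C (f i)) ∧
      C.card ≤ M * (∑ i, χ (f i)) ^ d := by
  let e := Fintype.equivFin ι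
  obtain ⟨C, hC, hCref, hCcard⟩ := hjoint _ (f ∘ e.symm) fun i => hf _
  refine ⟨C, hC, fun i => by simpa using hCref (e i), ?_⟩
  rwa [Function.comp_def, e.symm.sum_comp fun i => χ (f i)] at hCcard

theorem mul_add_mul_pow_lt (M s N d : ℕ) :
    M * (N + (N + 1) * s) ^ d < (N + 1) ^ d * (M * (s + 1) ^ d + 1) :=
  calc M * (N + (N + 1) * s) ^ d ≤ M * ((N + 1) * (s + 1)) ^ d := by gcongr; linarith
    _ = (N + 1) ^ d * (M * (s + 1) ^ d) := by rw [mul_pow]; ring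
    _ < (N + 1) ^ d * (M * (s + 1) ^ d + 1) :=
      Nat.mul_lt_mul_of_pos_left (Nat.lt_succ_self _) (by positivity)

theorem stmt11_general (d : ℕ) (K : Fin (d + 1) → Type*)
    [∀ i, TopologicalSpace (K i)] [∀ i, CompactSpace (K i)] [∀ i, T2Space (K i)]
    (hnm : ∀ i : Fin (d + 1), (i : ℕ) < d → ¬ TopologicalSpace.MetrizableSpace (K i))
    (hinf : Infinite (K (Fin.last d))) :
    ¬ FreeDimLE (∀ i, K i) d := by
  rintro ⟨𝔠, M, χ, -, h𝔠, hjoint⟩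
  choose m D P hD hP using fun i : Fin d => h𝔠.exists_seq_separatesAlong_of_not_metrizableSpace
    (hnm i.castSucc (by simp)) (continuous_apply i.castSucc) χ
  obtain ⟨Flast, hFlast⟩ :=
    Infinite.exists_subset_card_eq (K (Fin.last d)) (M * (∑ i, m i + 1) ^ d + 1)
  obtain ⟨Dlast, hDlast, hDlast_sep⟩ :=
    h𝔠.exists_mem_separatesAlong_of_finite (continuous_apply _) Flast.finite_toSet
  obtain ⟨C, hC, hCref, hCcard⟩ := exists_refines_of_fintype hjoint
    (fun o : Option (Fin d × Fin (χ Dlast + 1)) => o.elim Dlast fun p => D p.1 p.2)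
    (by rintro (_ | ⟨i, j⟩); exacts [hDlast, (hD i j).1])
  choose G hG hGsep using fun i : Fin d =>
    exists_finset_separatesAlong_of_pairwise (hP i) fun j hj => hCref (some (i, ⟨j, hj⟩))
  let F : ∀ i, Finset (K i) := Fin.lastCases Flast G
  have hlow := prod_card_le_card_of_separatesAlong hC.2 F (Fin.lastCases
    (by simpa [F] using hDlast_sep.of_refines (hCref none)) fun i => by simpa [F] using hGsep i)
  simp only [Fin.prod_univ_castSucc, F, Fin.lastCases_castSucc, Fin.lastCases_last, hG, hFlast,
    Finset.prod_const, Finset.card_univ, Fintype.card_fin] at hlow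
  simp only [Fintype.sum_option, Option.elim, Fintype.sum_prod_type, hD, Finset.sum_const,
    Finset.card_univ, Fintype.card_fin, smul_eq_mul, ← Finset.mul_sum] at hCcard
  have hbound := mul_add_mul_pow_lt M (∑ i, m i) (χ Dlast) d
  omega

/-- If `K₀, …, K_{d-1}` are nonmetrizable compacta and `K_d` is an infinite compactum,
then `K₀ × ⋯ × K_d` does not have free dimension ≤ d. -/
theorem stmt11 (d : ℕ) (hd : 1 ≤ d) (K : Fin (d + 1) → Type*)
    [∀ i, TopologicalSpace (K i)] [∀ i, CompactSpace (K i)] [∀ i, T2Space (K i)]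
    (hnm : ∀ i : Fin (d + 1), (i : ℕ) < d → ¬ TopologicalSpace.MetrizableSpace (K i))
    (hinf : Infinite (K (Fin.last d))) :
    ¬ FreeDimLE (∀ i, K i) d :=
  stmt11_general d K hnm hinf
end

section
/- (Sauer–Shelah) Let N, d be natural numbers with 0 ≤ d < N and T = {1,...,N}. If C ⊆ 2^T satisfies |C| > C(N,0) + C(N,1) + ... + C(N,d), then there exists S ⊆ T with |S| = d+1 such that the set of restrictions { f|_S : f ∈ C } equals 2^S. -/
open Finset

/-- Sauer–Shelah lemma: if `C ⊆ 2^{{1,…,N}}` has more than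
`C(N,0) + C(N,1) + ⋯ + C(N,d)` elements (with `d < N`), then some set `S` of size
`d + 1` is shattered by `C`. -/
theorem stmt14 (N d : ℕ) (hdN : d < N) (C : Finset (Fin N → Bool))
    (hC : ∑ i ∈ Finset.range (d + 1), N.choose i < C.card) :
    ∃ S : Finset (Fin N), S.card = d + 1 ∧
      ∀ g : Fin N → Bool, ∃ f ∈ C, ∀ i ∈ S, f i = g i := by
  set 𝒜 : Finset (Finset (Fin N)) := C.image fun f => Finset.univ.filter fun i => f i = true with h𝒜
  have hinj : Set.InjOn (fun f : Fin N → Bool => Finset.univ.filter fun i => f i = true) C := by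
    intro f _ g _ hfg
    funext i
    have := Finset.ext_iff.1 hfg i
    simp only [Finset.mem_filter, Finset.mem_univ, true_and] at this
    cases hf : f i <;> cases hg : g i <;> simp_all
  have hcard : 𝒜.card = C.card := Finset.card_image_of_injOn hinj
  -- shatterer is large
  have h1 : ∑ i ∈ Finset.range (d + 1), N.choose i < 𝒜.shatterer.card := by
    calc ∑ i ∈ Finset.range (d + 1), N.choose i < C.card := hC
    _ = 𝒜.card := hcard.symm
    _ ≤ 𝒜.shatterer.card := Finset.card_le_card_shatterer 𝒜
  -- count subsets of size ≤ d
  have h2 : ((Finset.univ : Finset (Finset (Fin N))).filter fun s => s.card ≤ d).card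
      = ∑ i ∈ Finset.range (d + 1), N.choose i := by
    have heq : ((Finset.univ : Finset (Finset (Fin N))).filter fun s => s.card ≤ d)
        = (Finset.range (d + 1)).biUnion fun i =>
            Finset.powersetCard i (Finset.univ : Finset (Fin N)) := by
      ext s
      simp [Finset.mem_powersetCard, Nat.lt_succ_iff]
    rw [heq, Finset.card_biUnion]
    · refine Finset.sum_congr rfl fun i _ => ?_
      rw [Finset.card_powersetCard, Finset.card_univ, Fintype.card_fin]
    · intro i _ j _ hij
      apply Finset.disjoint_left.2
      intro s hs hs'
      simp only [Finset.mem_powersetCard] at hs hs'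
      exact hij (hs.2 ▸ hs'.2)
  -- so shatterer contains a set of card > d
  have h3 : ∃ s ∈ 𝒜.shatterer, d + 1 ≤ s.card := by
    by_contra h
    push_neg at h
    have : 𝒜.shatterer ⊆ (Finset.univ.filter fun s => s.card ≤ d) := by
      intro s hs
      simp only [Finset.mem_filter, Finset.mem_univ, true_and]
      exact Nat.lt_succ_iff.1 (h s hs)
    have := Finset.card_le_card this
    omega
  obtain ⟨s, hs, hscard⟩ := h3
  -- shrink s to size d+1
  obtain ⟨S, hSs, hScard⟩ := Finset.exists_subset_card_eq hscard
  have hSsh : 𝒜.Shatters S :=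
    (Finset.mem_shatterer.1 hs).mono_right hSs
  refine ⟨S, hScard, fun g => ?_⟩
  obtain ⟨u, hu, huS⟩ := hSsh (Finset.filter_subset (fun i => g i = true) S)
  simp only [h𝒜, Finset.mem_image] at hu
  obtain ⟨f, hfC, rfl⟩ := hu
  refine ⟨f, hfC, fun i hiS => ?_⟩
  have := Finset.ext_iff.1 huS i
  simp only [Finset.mem_inter, Finset.mem_filter, Finset.mem_univ, true_and] at this
  cases hf : f i <;> cases hg : g i <;> simp_all
end

section
/- Let F be a finite irredundant subset of a Boolean algebra 𝔄 (no element g ∈ F lies in the subalgebra generated by F \ {g}). Then |F| ≤ |Atom(F)|, where Atom(F) is the set of atoms of the finite subalgebra generated by F. -/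
/-- Membership in the Boolean subalgebra of `α` generated by the set `Γ`. -/
inductive InBAGen {α : Type*} [BooleanAlgebra α] (Γ : Set α) : α → Prop
  | base {a : α} : a ∈ Γ → InBAGen Γ a
  | bot : InBAGen Γ ⊥
  | compl {a : α} : InBAGen Γ a → InBAGen Γ aᶜ
  | sup {a b : α} : InBAGen Γ a → InBAGen Γ b → InBAGen Γ (a ⊔ b)

/-- `Atom(F)`: the set of atoms of the (finite) Boolean subalgebra generated by `F`. -/
def AtomsOf {α : Type*} [BooleanAlgebra α] (F : Finset α) : Set α :=
  {a | InBAGen (↑F : Set α) a ∧ a ≠ ⊥ ∧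
    ∀ b, InBAGen (↑F : Set α) b → b < a → b = ⊥}

section aux
variable {α : Type*} [BooleanAlgebra α] [DecidableEq α]

theorem inbagen_mono {Γ Δ : Set α} (h : Γ ⊆ Δ) {a : α} (ha : InBAGen Γ a) : InBAGen Δ a := by
  induction ha with
  | base hb => exact InBAGen.base (h hb)
  | bot => exact InBAGen.bot
  | compl _ ih => exact InBAGen.compl ih
  | sup _ _ ih1 ih2 => exact InBAGen.sup ih1 ih2

theorem inbagen_top (Γ : Set α) : InBAGen Γ (⊤ : α) := by
  have := InBAGen.compl (InBAGen.bot (Γ := Γ))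
  rwa [compl_bot] at this

theorem inbagen_inf {Γ : Set α} {a b : α} (ha : InBAGen Γ a) (hb : InBAGen Γ b) :
    InBAGen Γ (a ⊓ b) := by
  have := InBAGen.compl (InBAGen.sup (InBAGen.compl ha) (InBAGen.compl hb))
  rwa [compl_sup, compl_compl, compl_compl] at this

theorem compl_key (x y g : α) : ((x⊓g)⊔(y⊓gᶜ))ᶜ = (xᶜ⊓g)⊔(yᶜ⊓gᶜ) := by
  apply compl_unique
  · rw [← disjoint_iff]
    simp only [disjoint_sup_left, disjoint_sup_right]
    refine ⟨⟨?_,?_⟩,?_,?_⟩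
    · exact (disjoint_compl_right (a := x)).mono inf_le_left inf_le_left
    · exact ((disjoint_compl_right (a := g)).symm).mono inf_le_right inf_le_right
    · exact (disjoint_compl_right (a := g)).mono inf_le_right inf_le_right
    · exact (disjoint_compl_right (a := y)).mono inf_le_left inf_le_left
  · rw [sup_sup_sup_comm, ← inf_sup_right, ← inf_sup_right]
    simp

theorem decomp {S : Finset α} {g : α} {z : α}
    (hz : InBAGen (↑(insert g S) : Set α) z) :
    ∃ x y, InBAGen (↑S : Set α) x ∧ InBAGen (↑S : Set α) y ∧ z = (x ⊓ g) ⊔ (y ⊓ gᶜ) := by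
  induction hz with
  | @base a h =>
    rw [Finset.coe_insert, Set.mem_insert_iff] at h
    rcases h with rfl | h
    · exact ⟨⊤, ⊥, inbagen_top _, InBAGen.bot, by simp⟩
    · exact ⟨a, a, InBAGen.base h, InBAGen.base h, by rw [← inf_sup_left]; simp⟩
  | bot => exact ⟨⊥, ⊥, InBAGen.bot, InBAGen.bot, by simp⟩
  | compl _ ih =>
    obtain ⟨x, y, hx, hy, rfl⟩ := ih
    exact ⟨xᶜ, yᶜ, InBAGen.compl hx, InBAGen.compl hy, compl_key x y g⟩
  | sup _ _ ih1 ih2 =>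
    obtain ⟨x, y, hx, hy, rfl⟩ := ih1
    obtain ⟨x', y', hx', hy', rfl⟩ := ih2
    exact ⟨x ⊔ x', y ⊔ y', InBAGen.sup hx hx', InBAGen.sup hy hy',
      by rw [sup_sup_sup_comm, ← inf_sup_right, ← inf_sup_right]⟩

theorem inbagen_empty {z : α} (hz : InBAGen (∅ : Set α) z) : z = ⊥ ∨ z = ⊤ := by
  induction hz with
  | base h => exact absurd h (Set.notMem_empty _)
  | bot => exact Or.inl rfl
  | compl _ ih => rcases ih with rfl | rfl <;> simp
  | sup _ _ ih1 ih2 => rcases ih1 with rfl | rfl <;> rcases ih2 with rfl | rfl <;> simp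

theorem atoms_disjoint {S : Finset α} {a b : α} (ha : a ∈ AtomsOf S) (hb : b ∈ AtomsOf S)
    (hne : a ≠ b) : a ⊓ b = ⊥ := by
  rcases lt_or_eq_of_le (inf_le_left : a ⊓ b ≤ a) with h | h
  · exact ha.2.2 _ (inbagen_inf ha.1 hb.1) h
  · -- a ⊓ b = a, so a ≤ b
    have hab : a ≤ b := h ▸ inf_le_right
    rcases lt_or_eq_of_le hab with h' | h'
    · exact absurd (hb.2.2 _ ha.1 h') ha.2.1
    · exact absurd h' hne

end aux
section aux2
variable {α : Type*} [BooleanAlgebra α] [DecidableEq α]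

/-- If `a` is an atom of `⟨S⟩` and `a ⊓ g ≠ ⊥`, then `a ⊓ g` is an atom of `⟨insert g S⟩`. -/
theorem atom_inf_left {S : Finset α} {g a : α} (ha : a ∈ AtomsOf S) (hne : a ⊓ g ≠ ⊥) :
    a ⊓ g ∈ AtomsOf (insert g S) := by
  refine ⟨inbagen_inf (inbagen_mono (by simp) ha.1)
    (InBAGen.base (by simp)), hne, ?_⟩
  intro z hz hlt
  obtain ⟨x, y, hx, hy, rfl⟩ := decomp hz
  have hzg : (x ⊓ g) ⊔ (y ⊓ gᶜ) ≤ g := le_trans hlt.le inf_le_right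
  have hy0 : y ⊓ gᶜ = ⊥ := by
    have h1 : y ⊓ gᶜ ≤ g := le_trans le_sup_right hzg
    have h2 : y ⊓ gᶜ ≤ gᶜ := inf_le_right
    have := le_inf h1 h2
    simpa using le_bot_iff.mp (by simpa using this)
  rw [hy0, sup_bot_eq] at hlt ⊢
  have hza : x ⊓ g ≤ a := le_trans hlt.le inf_le_left
  have hxa : x ⊓ g = (x ⊓ a) ⊓ g := by
    rw [inf_right_comm]
    exact le_antisymm (le_inf le_rfl hza) inf_le_left
  rcases lt_or_eq_of_le (inf_le_right : x ⊓ a ≤ a) with h | h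
  · have := ha.2.2 _ (inbagen_inf hx ha.1) h
    rw [hxa, this, bot_inf_eq]
  · rw [hxa, h] at hlt
    exact absurd hlt (lt_irrefl _)

/-- If `a` is an atom of `⟨S⟩` and `a ⊓ gᶜ ≠ ⊥`, then `a ⊓ gᶜ` is an atom of `⟨insert g S⟩`. -/
theorem atom_inf_right {S : Finset α} {g a : α} (ha : a ∈ AtomsOf S) (hne : a ⊓ gᶜ ≠ ⊥) :
    a ⊓ gᶜ ∈ AtomsOf (insert g S) := by
  refine ⟨inbagen_inf (inbagen_mono (by simp) ha.1)
    (InBAGen.compl (InBAGen.base (by simp))), hne, ?_⟩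
  intro z hz hlt
  obtain ⟨x, y, hx, hy, rfl⟩ := decomp hz
  have hzg : (x ⊓ g) ⊔ (y ⊓ gᶜ) ≤ gᶜ := le_trans hlt.le inf_le_right
  have hx0 : x ⊓ g = ⊥ := by
    have h1 : x ⊓ g ≤ gᶜ := le_trans le_sup_left hzg
    have h2 : x ⊓ g ≤ g := inf_le_right
    have := le_inf h2 h1
    simpa using le_bot_iff.mp (by simpa using this)
  rw [hx0, bot_sup_eq] at hlt ⊢
  have hza : y ⊓ gᶜ ≤ a := le_trans hlt.le inf_le_left
  have hxa : y ⊓ gᶜ = (y ⊓ a) ⊓ gᶜ := by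
    rw [inf_right_comm]
    exact le_antisymm (le_inf le_rfl hza) inf_le_left
  rcases lt_or_eq_of_le (inf_le_right : y ⊓ a ≤ a) with h | h
  · have := ha.2.2 _ (inbagen_inf hy ha.1) h
    rw [hxa, this, bot_inf_eq]
  · rw [hxa, h] at hlt
    exact absurd hlt (lt_irrefl _)

/-- The atoms of `⟨S⟩` form a finite set whose supremum is `⊤`. -/
theorem atoms_finset (S : Finset α) :
    ∃ T : Finset α, (↑T : Set α) = AtomsOf S ∧ T.sup id = ⊤ := by
  induction S using Finset.induction_on with
  | empty =>
    by_cases h : (⊤ : α) = ⊥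
    · refine ⟨∅, ?_, by simp [← h]⟩
      ext a
      simp only [Finset.coe_empty, Set.mem_empty_iff_false, false_iff]
      rintro ⟨ha, hne, -⟩
      rcases inbagen_empty (by simpa using ha) with rfl | rfl
      · exact hne rfl
      · exact hne h
    · refine ⟨{⊤}, ?_, by simp⟩
      ext a
      simp only [Finset.coe_singleton, Set.mem_singleton_iff]
      constructor
      · rintro rfl
        refine ⟨inbagen_top _, h, fun b hb hlt => ?_⟩
        rcases inbagen_empty (by simpa using hb) with rfl | rfl
        · rfl
        · exact absurd hlt (lt_irrefl _)
      · rintro ⟨ha, hne, -⟩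
        rcases inbagen_empty (by simpa using ha) with rfl | rfl
        · exact absurd rfl hne
        · rfl
  | @insert g S hg ih =>
    obtain ⟨T, hT, hsup⟩ := ih
    refine ⟨((T.image (· ⊓ g)) ∪ (T.image (· ⊓ gᶜ))).erase ⊥, ?_, ?_⟩
    · ext c
      simp only [Finset.coe_erase, Set.mem_diff, Finset.coe_union, Set.mem_union,
        Finset.coe_image, Set.mem_image, Set.mem_singleton_iff]
      constructor
      · rintro ⟨h, hc⟩
        rcases h with ⟨a, haT, rfl⟩ | ⟨a, haT, rfl⟩
        · exact atom_inf_left (hT ▸ Finset.mem_coe.mpr haT) hc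
        · exact atom_inf_right (hT ▸ Finset.mem_coe.mpr haT) hc
      · intro hc
        refine ⟨?_, hc.2.1⟩
        obtain ⟨x, y, hx, hy, hczz⟩ := decomp hc.1
        have hone : x ⊓ g ≠ ⊥ ∨ y ⊓ gᶜ ≠ ⊥ := by
          by_contra h
          push_neg at h
          exact hc.2.1 (by rw [hczz, h.1, h.2, sup_bot_eq])
        -- in either case, c equals that nonzero part
        have key : ∀ u : α, InBAGen (↑(insert g S) : Set α) u → u ≤ c → u ≠ ⊥ → u = c := by
          intro u hu hle hune
          rcases lt_or_eq_of_le hle with h | h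
          · exact absurd (hc.2.2 _ hu h) hune
          · exact h
        rcases hone with h1 | h1
        · have hxg : InBAGen (↑(insert g S) : Set α) (x ⊓ g) :=
            inbagen_inf (inbagen_mono (by simp) hx) (InBAGen.base (by simp))
          have hcx : c = x ⊓ g := (key _ hxg (hczz ▸ le_sup_left) h1).symm
          have hcg : c ≤ g := hcx ▸ inf_le_right
          -- find atom a of S with c ⊓ a ≠ ⊥
          have hct : c ⊓ T.sup id = c := by rw [hsup, inf_top_eq]
          rw [Finset.sup_inf_distrib_left] at hct
          have : ∃ a ∈ T, c ⊓ a ≠ ⊥ := by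
            by_contra h
            push_neg at h
            exact hc.2.1 (by rw [← hct]; exact (Finset.sup_eq_bot_iff _ _).mpr (by simpa using h))
          obtain ⟨a, haT, hca⟩ := this
          have haA : a ∈ AtomsOf S := hT ▸ Finset.mem_coe.mpr haT
          have hcaI : InBAGen (↑(insert g S) : Set α) (c ⊓ a) :=
            inbagen_inf hc.1 (inbagen_mono (by simp) haA.1)
          have hceq : c ⊓ a = c := key _ hcaI inf_le_left hca
          have hcle : c ≤ a ⊓ g := le_inf (hceq ▸ inf_le_right) hcg
          have hagne : a ⊓ g ≠ ⊥ := fun h => hc.2.1 (le_bot_iff.mp (h ▸ hcle))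
          have hatom := atom_inf_left (g := g) haA hagne
          rcases lt_or_eq_of_le hcle with h' | h'
          · exact absurd (hatom.2.2 _ hc.1 h') hc.2.1
          · exact Or.inl ⟨a, haT, h'.symm⟩
        · have hxg : InBAGen (↑(insert g S) : Set α) (y ⊓ gᶜ) :=
            inbagen_inf (inbagen_mono (by simp) hy) (InBAGen.compl (InBAGen.base (by simp)))
          have hcx : c = y ⊓ gᶜ := (key _ hxg (hczz ▸ le_sup_right) h1).symm
          have hcg : c ≤ gᶜ := hcx ▸ inf_le_right
          have hct : c ⊓ T.sup id = c := by rw [hsup, inf_top_eq]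
          rw [Finset.sup_inf_distrib_left] at hct
          have : ∃ a ∈ T, c ⊓ a ≠ ⊥ := by
            by_contra h
            push_neg at h
            exact hc.2.1 (by rw [← hct]; exact (Finset.sup_eq_bot_iff _ _).mpr (by simpa using h))
          obtain ⟨a, haT, hca⟩ := this
          have haA : a ∈ AtomsOf S := hT ▸ Finset.mem_coe.mpr haT
          have hcaI : InBAGen (↑(insert g S) : Set α) (c ⊓ a) :=
            inbagen_inf hc.1 (inbagen_mono (by simp) haA.1)
          have hceq : c ⊓ a = c := key _ hcaI inf_le_left hca
          have hcle : c ≤ a ⊓ gᶜ := le_inf (hceq ▸ inf_le_right) hcg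
          have hagne : a ⊓ gᶜ ≠ ⊥ := fun h => hc.2.1 (le_bot_iff.mp (h ▸ hcle))
          have hatom := atom_inf_right (g := g) haA hagne
          rcases lt_or_eq_of_le hcle with h' | h'
          · exact absurd (hatom.2.2 _ hc.1 h') hc.2.1
          · exact Or.inr ⟨a, haT, h'.symm⟩
    · rw [Finset.sup_erase_bot, Finset.sup_union, Finset.sup_image, Finset.sup_image]
      simp only [Function.comp_def, id_eq]
      rw [← Finset.sup_inf_distrib_right, ← Finset.sup_inf_distrib_right]
      rw [show (fun (x:α) => x) = id from rfl, hsup]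
      simp

end aux2

/-- An irredundant finite subset `F` of a Boolean algebra (no `g ∈ F` lies in the
subalgebra generated by `F \ {g}`) satisfies `|F| ≤ |Atom(F)|`. -/
theorem stmt15 {α : Type*} [BooleanAlgebra α] [DecidableEq α] (F : Finset α)
    (hirr : ∀ g ∈ F, ¬ InBAGen (↑(F.erase g) : Set α) g) :
    F.card ≤ (AtomsOf F).ncard := by
  induction F using Finset.induction_on with
  | empty => simp
  | @insert g S hg ih =>
    have hirrS : ∀ h ∈ S, ¬ InBAGen (↑(S.erase h) : Set α) h := by
      intro h hh hcon
      exact hirr h (Finset.mem_insert_of_mem hh)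
        (inbagen_mono (by
          intro z hz
          simp only [Finset.coe_erase, Set.mem_diff] at hz ⊢
          exact ⟨Finset.mem_coe.mpr (Finset.mem_insert_of_mem (Finset.mem_coe.mp hz.1)), hz.2⟩) hcon)
    have ihS := ih hirrS
    obtain ⟨T, hT, hsup⟩ := atoms_finset S
    obtain ⟨T'', hT'', -⟩ := atoms_finset (insert g S)
    have hgS : ¬ InBAGen (↑S : Set α) g := by
      have := hirr g (Finset.mem_insert_self g S)
      rwa [Finset.erase_insert hg] at this
    have hex : ∃ a ∈ T, a ⊓ g ≠ ⊥ ∧ a ⊓ gᶜ ≠ ⊥ := by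
      by_contra hcon
      push_neg at hcon
      apply hgS
      have hgeq : g = T.sup (fun a => g ⊓ a) := by
        have := Finset.sup_inf_distrib_left T id g
        rw [hsup, inf_top_eq] at this
        simpa using this
      rw [hgeq]
      apply Finset.sup_induction InBAGen.bot (fun a ha b hb => InBAGen.sup ha hb)
      intro a haT
      have haA : a ∈ AtomsOf S := hT ▸ Finset.mem_coe.mpr haT
      by_cases hag : a ⊓ g = ⊥
      · rw [inf_comm, hag]
        exact InBAGen.bot
      · have h2 := hcon a haT hag
        have hle : a ≤ g := by
          have := le_compl_iff_disjoint_right.mpr (disjoint_iff.mpr h2)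
          rwa [compl_compl] at this
        rw [inf_comm, inf_eq_left.mpr hle]
        exact haA.1
    obtain ⟨a, haT, hag, hagc⟩ := hex
    set φ : α → α := fun b => if b ⊓ g = ⊥ then b ⊓ gᶜ else b ⊓ g with hφ
    have hφmem : ∀ b ∈ T, φ b ∈ AtomsOf (insert g S) := by
      intro b hb
      have hbA : b ∈ AtomsOf S := hT ▸ Finset.mem_coe.mpr hb
      by_cases h : b ⊓ g = ⊥
      · have hbc : b ⊓ gᶜ ≠ ⊥ := by
          intro h2
          apply hbA.2.1
          have : b = (b ⊓ g) ⊔ (b ⊓ gᶜ) := by rw [← inf_sup_left]; simp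
          rw [h, h2, sup_bot_eq] at this
          exact this
        simpa [hφ, h] using atom_inf_right hbA hbc
      · simpa [hφ, h] using atom_inf_left hbA h
    have hφle : ∀ b, φ b ≤ b := by
      intro b
      simp only [hφ]
      split <;> exact inf_le_left
    have hinj : Set.InjOn φ ↑T := by
      intro b1 h1 b2 h2 heq
      by_contra hne
      have hd := atoms_disjoint (hT ▸ h1) (hT ▸ h2) hne
      have : φ b1 ≤ b1 ⊓ b2 := le_inf (hφle b1) (heq ▸ hφle b2)
      rw [hd] at this
      exact (hφmem b1 (Finset.mem_coe.mp h1)).2.1 (le_bot_iff.mp this)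
    have hw : (a ⊓ gᶜ) ∈ AtomsOf (insert g S) := atom_inf_right (hT ▸ Finset.mem_coe.mpr haT) hagc
    have hwv : φ a = a ⊓ g := if_neg hag
    have hwni : a ⊓ gᶜ ∉ T.image φ := by
      intro hmem
      obtain ⟨b, hbT, hbeq⟩ := Finset.mem_image.mp hmem
      by_cases hba : b = a
      · subst hba
        rw [hwv] at hbeq
        apply hag
        have h1 : b ⊓ g ≤ g := inf_le_right
        have h2 : b ⊓ g ≤ gᶜ := hbeq ▸ inf_le_right
        simpa using le_bot_iff.mp (by simpa using le_inf h1 h2)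
      · have hd := atoms_disjoint (hT ▸ Finset.mem_coe.mpr hbT) (hT ▸ Finset.mem_coe.mpr haT) hba
        have : φ b ≤ b ⊓ a := le_inf (hφle b) (hbeq ▸ inf_le_left)
        rw [hd] at this
        exact (hφmem b hbT).2.1 (le_bot_iff.mp this)
    have hsub : insert (a ⊓ gᶜ) (T.image φ) ⊆ T'' := by
      intro c hc
      rcases Finset.mem_insert.mp hc with rfl | hc
      · exact Finset.mem_coe.mp (hT'' ▸ hw)
      · obtain ⟨b, hbT, rfl⟩ := Finset.mem_image.mp hc
        exact Finset.mem_coe.mp (hT'' ▸ hφmem b hbT)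
    calc (insert g S).card = S.card + 1 := Finset.card_insert_of_notMem hg
      _ ≤ (AtomsOf S).ncard + 1 := by omega
      _ = T.card + 1 := by rw [← hT, Set.ncard_coe_finset]
      _ = (T.image φ).card + 1 := by rw [Finset.card_image_of_injOn hinj]
      _ = (insert (a ⊓ gᶜ) (T.image φ)).card := (Finset.card_insert_of_notMem hwni).symm
      _ ≤ T''.card := Finset.card_le_card hsub
      _ = (AtomsOf (insert g S)).ncard := by rw [← hT'', Set.ncard_coe_finset]
end

section
/- Let 𝔄 be an initial chain algebra on a pseudotree. Then 𝔄 does not contain a subalgebra isomorphic to the free product 𝔅 ⊗ ℭ of an infinite Boolean algebra 𝔅 and an uncountable Boolean algebra ℭ. -/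
attribute [local instance] Classical.propDecidable

namespace S19

variable {B : Type*} [BooleanAlgebra B]

lemma step_lemma {r : B} (hr : (Set.Iic r).Infinite) :
    ∃ a : B, a ≠ ⊥ ∧ a ≤ r ∧ (Set.Iic (r \ a)).Infinite := by
  obtain ⟨x, hx⟩ := (hr.diff (Set.toFinite {⊥, r})).nonempty
  obtain ⟨hxr, hxn⟩ := hx
  simp only [Set.mem_insert_iff, Set.mem_singleton_iff, not_or] at hxn
  obtain ⟨hxb, hxr'⟩ := hxn
  have hxler : x ≤ r := hxr
  by_cases h1 : (Set.Iic (r \ x)).Infinite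
  · exact ⟨x, hxb, hxler, h1⟩
  · have hfin : (Set.Iic (r \ x)).Finite := Set.not_infinite.mp h1
    have hx_inf : (Set.Iic x).Infinite := by
      by_contra h2
      have hfin2 : (Set.Iic x).Finite := Set.not_infinite.mp h2
      have hinj : Function.Injective (fun y : B => (y ⊓ x, y \ x)) := by
        intro y y' h
        have h1' : y ⊓ x = y' ⊓ x := congrArg Prod.fst h
        have h2' : y \ x = y' \ x := congrArg Prod.snd h
        calc y = y ⊓ x ⊔ y \ x := (sup_inf_sdiff y x).symm
        _ = y' ⊓ x ⊔ y' \ x := by rw [h1', h2']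
        _ = y' := sup_inf_sdiff y' x
      have himg : (fun y : B => (y ⊓ x, y \ x)) '' (Set.Iic r) ⊆ (Set.Iic x) ×ˢ (Set.Iic (r \ x)) := by
        rintro _ ⟨y, hy, rfl⟩
        exact ⟨inf_le_right, sdiff_le_sdiff_right hy⟩
      have : ((fun y : B => (y ⊓ x, y \ x)) '' (Set.Iic r)).Finite :=
        (hfin2.prod hfin).subset himg
      exact hr (Set.Finite.of_finite_image this hinj.injOn)
    refine ⟨r \ x, ?_, sdiff_le, ?_⟩
    · intro h
      rw [sdiff_eq_bot_iff] at h
      exact hxr' (le_antisymm hxler h)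
    · rwa [sdiff_sdiff_right_self, inf_eq_right.mpr hxler]

lemma exists_disjoint_seq [Infinite B] :
    ∃ b : ℕ → B, (∀ n, b n ≠ ⊥) ∧ ∀ m n, m ≠ n → b m ⊓ b n = ⊥ := by
  have h0 : (Set.Iic (⊤ : B)).Infinite := by
    rw [Set.Iic_top]; exact Set.infinite_univ
  let F : (Σ' r : B, (Set.Iic r).Infinite) → (Σ' r : B, (Set.Iic r).Infinite) := fun p =>
    ⟨p.1 \ (step_lemma p.2).choose, (step_lemma p.2).choose_spec.2.2⟩
  let s : ℕ → Σ' r : B, (Set.Iic r).Infinite := fun n => F^[n] ⟨⊤, h0⟩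
  have hs_succ : ∀ n, s (n + 1) = F (s n) := fun n => Function.iterate_succ_apply' F n _
  let b : ℕ → B := fun n => (step_lemma (s n).2).choose
  have hbne : ∀ n, b n ≠ ⊥ := fun n => (step_lemma (s n).2).choose_spec.1
  have hble : ∀ n, b n ≤ (s n).1 := fun n => (step_lemma (s n).2).choose_spec.2.1
  have hsucc : ∀ n, (s (n + 1)).1 = (s n).1 \ b n := by
    intro n; rw [hs_succ n]
  have hmono : ∀ m n, m ≤ n → (s n).1 ≤ (s m).1 := by
    intro m n hmn
    induction n with
    | zero => simp_all
    | succ n ih =>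
      rcases Nat.lt_or_ge m (n+1) with h | h
      · have := ih (Nat.lt_succ_iff.mp h)
        refine le_trans ?_ this
        rw [hsucc n]; exact sdiff_le
      · have : m = n + 1 := le_antisymm hmn h
        subst this; rfl
  have hdisj : ∀ m n, m < n → b m ⊓ b n = ⊥ := by
    intro m n hmn
    have h1 : b n ≤ (s (m+1)).1 := le_trans (hble n) (hmono (m+1) n hmn)
    rw [hsucc m] at h1
    have : b m ⊓ b n ≤ b m ⊓ ((s m).1 \ b m) := inf_le_inf_left _ h1
    rw [inf_sdiff_self_right] at this
    exact le_bot_iff.mp this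
  refine ⟨b, hbne, fun m n hmn => ?_⟩
  rcases Nat.lt_or_ge m n with h | h
  · exact hdisj m n h
  · have h' : n < m := lt_of_le_of_ne h (Ne.symm hmn)
    rw [inf_comm]; exact hdisj n m h'




lemma exists_uncountable_fiber {α : Type*} {Z : Type*} [Countable Z]
    {s : Set α} (hs : ¬ s.Countable) (φ : α → Z) :
    ∃ z : Z, ¬ {a | a ∈ s ∧ φ a = z}.Countable := by
  by_contra h
  push_neg at h
  apply hs
  have he : s = ⋃ z : Z, {a | a ∈ s ∧ φ a = z} := by
    ext a
    simp only [Set.mem_iUnion, Set.mem_setOf_eq]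
    exact ⟨fun ha => ⟨φ a, ha, rfl⟩, fun ⟨z, hz, _⟩ => hz⟩
  rw [he]
  exact Set.countable_iUnion h

lemma exists_pair_fiber {α : Type*} {Z : Type*} [Countable Z]
    {s : Set α} (hs : ¬ s.Countable) (φ : α → Z) :
    ∃ c ∈ s, ∃ c' ∈ s, c ≠ c' ∧ φ c = φ c' := by
  obtain ⟨z, hz⟩ := exists_uncountable_fiber hs φ
  have : ¬ {a | a ∈ s ∧ φ a = z}.Subsingleton := fun h => hz h.countable
  rw [Set.not_subsingleton_iff] at this
  obtain ⟨c, hc, c', hc', hne⟩ := this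
  exact ⟨c, hc.1, c', hc'.1, hne, hc.2.trans hc'.2.symm⟩

variable {T : Type*} [PartialOrder T]

noncomputable def BRep (k : ℕ) (t : Fin k → T) (P : (Fin k → Bool) → Bool) : Set T :=
  {p | P (fun i => decide (p ≤ t i)) = true}

lemma mem_BRep_iff {k : ℕ} {t : Fin k → T} {P : (Fin k → Bool) → Bool} {p : T} :
    p ∈ BRep k t P ↔ P (fun i => decide (p ≤ t i)) = true := Iff.rfl

theorem rep_of_InBAGen {x : Set T} (h : InBAGen (Set.range (Set.Iic : T → Set T)) x) :
    ∃ (k : ℕ) (t : Fin k → T) (P : (Fin k → Bool) → Bool), x = BRep k t P := by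
  induction h with
  | base ha =>
    obtain ⟨t0, rfl⟩ := ha
    refine ⟨1, fun _ => t0, fun v => v 0, ?_⟩
    ext p
    simp [BRep, Set.mem_Iic]
  | bot =>
    refine ⟨0, Fin.elim0, fun _ => false, ?_⟩
    ext p
    simp [BRep]
  | compl h ih =>
    obtain ⟨k, t, P, rfl⟩ := ih
    refine ⟨k, t, fun v => !P v, ?_⟩
    ext p
    simp [BRep]
  | sup h1 h2 ih1 ih2 =>
    obtain ⟨k1, t1, P1, rfl⟩ := ih1
    obtain ⟨k2, t2, P2, rfl⟩ := ih2
    refine ⟨k1 + k2, Fin.append t1 t2,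
      fun v => P1 (fun i => v (Fin.castAdd k2 i)) || P2 (fun i => v (Fin.natAdd k1 i)), ?_⟩
    ext p
    simp [BRep, Fin.append_left, Fin.append_right]


def Wset (κ : ℕ → ℕ) (τ : ∀ m, Fin (κ m) → T) : Set T :=
  ⋃ j : (m : ℕ) × Fin (κ m), Set.Iic (τ j.1 j.2)

def CA (κ : ℕ → ℕ) (τ : ∀ m, Fin (κ m) → T) (x : T) : Prop :=
  ∃ j : (m : ℕ) × Fin (κ m), Set.Iic x ∩ Wset κ τ ⊆ Set.Iic (τ j.1 j.2)

noncomputable def pattern (κ : ℕ → ℕ) (τ : ∀ m, Fin (κ m) → T) (m : ℕ) (p : T) :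
    Fin (κ m) → Bool := fun i => decide (p ≤ τ m i)

def Str (κ : ℕ → ℕ) (τ : ∀ m, Fin (κ m) → T) (Y : ℕ → Set T)
    (j : (m : ℕ) × Fin (κ m)) (x : T) (m : ℕ) : Prop :=
  ∃ p q : T, p ∈ Y m ∧ q ∈ Y m ∧ p ≤ τ j.1 j.2 ∧ q ≤ τ j.1 j.2 ∧
    pattern κ τ m p = pattern κ τ m q ∧ p ≤ x ∧ ¬ q ≤ x

theorem core (hps : ∀ t : T, IsChain (· ≤ ·) (Set.Iic t))
    {C : Type*} [Uncountable C]
    (κ : ℕ → ℕ) (τ : ∀ m, Fin (κ m) → T) (Q : ∀ m, (Fin (κ m) → Bool) → Bool)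
    (Y : ℕ → Set T)
    (hrep : ∀ m, Y m = BRep (κ m) (τ m) (Q m))
    (hdisjY : ∀ {m n : ℕ}, m ≠ n → ∀ {p : T}, p ∈ Y m → p ∈ Y n → False)
    (hcov : ∀ m, ∀ p ∈ Y m, ∃ i, p ≤ τ m i)
    (G : C → Set T)
    (hGrep : ∀ c, ∃ (k : ℕ) (t : Fin k → T) (P : (Fin k → Bool) → Bool), G c = BRep k t P)
    (hdiff : ∀ (m : ℕ) (c c' : C), c ≠ c' → ∃ p ∈ Y m, ¬ (p ∈ G c ↔ p ∈ G c')) :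
    False := by
  classical
  -- basic facts
  have hCu : ¬ (Set.univ : Set C).Countable := by
    rw [Set.countable_univ_iff]
    exact not_countable
  obtain ⟨c₀, -, c₁, -, hc01, -⟩ := exists_pair_fiber hCu (fun _ => (0 : ℕ))
  obtain ⟨p₀, hp₀Y, -⟩ := hdiff 0 c₀ c₁ hc01
  have hTne : Nonempty T := ⟨p₀⟩
  obtain ⟨i₀, -⟩ := hcov 0 p₀ hp₀Y
  have hιne : Nonempty ((m : ℕ) × Fin (κ m)) := ⟨⟨0, i₀⟩⟩
  have hWmem : ∀ {m : ℕ} {p : T}, p ∈ Y m → p ∈ Wset κ τ := by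
    intro m p hp
    obtain ⟨i, hi⟩ := hcov m p hp
    exact Set.mem_iUnion.mpr ⟨⟨m, i⟩, Set.mem_Iic.mpr hi⟩
  -- comparability
  have tot : ∀ (z : T) {a b : T}, a ≤ z → b ≤ z → a ≤ b ∨ b ≤ a := by
    intro z a b ha hb
    rcases eq_or_ne a b with rfl | hne
    · exact Or.inl le_rfl
    · exact hps z (Set.mem_Iic.mpr ha) (Set.mem_Iic.mpr hb) hne
  -- pattern facts
  have memY_patt : ∀ (m : ℕ) (p q : T), p ∈ Y m →
      pattern κ τ m q = pattern κ τ m p → q ∈ Y m := by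
    intro m p q hp hqp
    rw [hrep m] at hp ⊢
    rw [mem_BRep_iff] at hp ⊢
    have h1 : (fun i => decide (q ≤ τ m i)) = (fun i => decide (p ≤ τ m i)) := hqp
    rw [h1]
    exact hp
  have sandwich : ∀ (m : ℕ) (p q r : T), p ≤ q → q ≤ r →
      pattern κ τ m p = pattern κ τ m r → pattern κ τ m q = pattern κ τ m p := by
    intro m p q r hpq hqr hpr
    funext i
    show decide (q ≤ τ m i) = decide (p ≤ τ m i)
    refine decide_eq_decide.mpr ⟨fun hq => hpq.trans hq, fun hp => ?_⟩
    have h1 : (p ≤ τ m i) ↔ (r ≤ τ m i) := decide_eq_decide.mp (congrFun hpr i)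
    exact hqr.trans (h1.mp hp)
  -- straddle uniqueness
  have str_unique : ∀ (j : (m : ℕ) × Fin (κ m)) (x : T) (m m' : ℕ),
      Str κ τ Y j x m → Str κ τ Y j x m' → m = m' := by
    rintro j x m m' ⟨p, q, hpY, hqY, hpL, hqL, hpat, hpx, hqx⟩
      ⟨p', q', hp'Y, hq'Y, hp'L, hq'L, hpat', hp'x, hq'x⟩
    by_contra hne
    have h1 : p' ≤ q := by
      rcases tot (τ j.1 j.2) hp'L hqL with h | h
      · exact h
      · exact absurd (h.trans hp'x) hqx
    have h2 : p ≤ q' := by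
      rcases tot (τ j.1 j.2) hpL hq'L with h | h
      · exact h
      · exact absurd (h.trans hpx) hq'x
    rcases tot (τ j.1 j.2) hpL hp'L with h | h
    · have hs := sandwich m p p' q h h1 hpat
      exact hdisjY hne (memY_patt m p p' hpY hs) hp'Y
    · have hs := sandwich m' p' p q' h h2 hpat'
      exact hdisjY hne hpY (memY_patt m' p' p hp'Y hs)
  -- guarded data for the A/B dichotomy
  have hdata : ∀ x : T, ∃ (oj : Option ((m : ℕ) × Fin (κ m))) (om : Option ℕ),
      (∀ j, oj = some j → Set.Iic x ∩ Wset κ τ ⊆ Set.Iic (τ j.1 j.2)) ∧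
      (CA κ τ x → ∃ j, oj = some j) ∧
      (∀ j m, oj = some j → Str κ τ Y j x m → om = some m) := by
    intro x
    by_cases h : CA κ τ x
    · by_cases h2 : ∃ m, Str κ τ Y h.choose x m
      · refine ⟨some h.choose, some h2.choose, ?_, fun _ => ⟨h.choose, rfl⟩, ?_⟩
        · intro j hj
          cases Option.some.inj hj
          exact h.choose_spec
        · intro j m hj hstr
          cases Option.some.inj hj
          exact congrArg some (str_unique _ _ _ _ h2.choose_spec hstr)
      · refine ⟨some h.choose, none, ?_, fun _ => ⟨h.choose, rfl⟩, ?_⟩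
        · intro j hj
          cases Option.some.inj hj
          exact h.choose_spec
        · intro j m hj hstr
          cases Option.some.inj hj
          exact absurd ⟨m, hstr⟩ h2
    · refine ⟨none, none, ?_, ?_, ?_⟩
      · intro j hj
        cases hj
      · intro hca
        exact absurd hca h
      · intro j m hj
        cases hj
  choose oA oM hA1 hA2 hA3 using hdata
  -- choose representations for G
  choose kk tt PP hG using hGrep
  -- pigeonhole 1 : on kk
  obtain ⟨k₀, hS1⟩ := exists_uncountable_fiber hCu kk
  -- uniform representation at k₀
  have hGrep₀ : ∀ c : C, ∃ (t : Fin k₀ → T) (P : (Fin k₀ → Bool) → Bool),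
      (kk c = k₀ → G c = BRep k₀ t P) := by
    intro c
    by_cases h : kk c = k₀
    · refine ⟨fun i => tt c (Fin.cast h.symm i),
        fun v => PP c (fun i => v (Fin.cast h i)), fun _ => ?_⟩
      rw [hG c]
      ext p
      rw [mem_BRep_iff, mem_BRep_iff]
      have hcc : (fun i => decide (p ≤ tt c (Fin.cast h.symm (Fin.cast h i))))
          = (fun i => decide (p ≤ tt c i)) := by
        funext i
        have hi : Fin.cast h.symm (Fin.cast h i) = i := by
          apply Fin.ext
          simp
        rw [hi]
      rw [hcc]
    · exact ⟨fun _ => hTne.some, fun _ => false, fun hc => absurd hc h⟩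
  choose t1 P1 hG1 using hGrep₀
  -- pigeonhole 2 : on P1
  obtain ⟨P₀, hS2⟩ := exists_uncountable_fiber hS1 P1
  -- pigeonhole 3 : on the A/B data
  obtain ⟨D, hS3⟩ := exists_uncountable_fiber hS2
    (fun c => (fun i : Fin k₀ => (oA (t1 c i), oM (t1 c i))))
  -- choice of the fiber m*
  set S₀ : ℕ := Finset.univ.sup (fun i : Fin k₀ => ((D i).2).getD 0) with hS₀
  set mstar : ℕ := S₀ + 1 with hmstardef
  have hmstar : ∀ i : Fin k₀, (D i).2 ≠ some mstar := by
    intro i h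
    have h2 : ((D i).2).getD 0 ≤ S₀ :=
      Finset.le_sup (f := fun i : Fin k₀ => ((D i).2).getD 0) (Finset.mem_univ i)
    rw [h] at h2
    simp only [Option.getD_some] at h2
    omega
  -- escape lemma
  have escape : ∀ x : T, ¬ CA κ τ x → ∃ y : T, y ≤ x ∧ y ∈ Wset κ τ ∧
      ∀ l : Fin (κ mstar), ¬ y ≤ τ mstar l := by
    intro x hB
    have h1 : ∀ j : (m : ℕ) × Fin (κ m), ∃ y : T,
        (y ≤ x ∧ y ∈ Wset κ τ) ∧ ¬ y ≤ τ j.1 j.2 := by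
      intro j
      have h2 : ¬ (Set.Iic x ∩ Wset κ τ ⊆ Set.Iic (τ j.1 j.2)) := fun hc => hB ⟨j, hc⟩
      obtain ⟨y, hy, hy2⟩ := Set.not_subset.mp h2
      exact ⟨y, ⟨Set.mem_Iic.mp hy.1, hy.2⟩, fun h => hy2 (Set.mem_Iic.mpr h)⟩
    have key : ∀ s : Finset (Fin (κ mstar)), ∃ y : T,
        (y ≤ x ∧ y ∈ Wset κ τ) ∧ ∀ l ∈ s, ¬ y ≤ τ mstar l := by
      intro s
      induction s using Finset.induction with
      | empty =>
        obtain ⟨y, hy, -⟩ := h1 hιne.some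
        exact ⟨y, hy, fun l hl => absurd hl (Finset.notMem_empty l)⟩
      | @insert a s' ha ih =>
        obtain ⟨y1, hy1, hy1s⟩ := ih
        obtain ⟨y2, hy2, hy2a⟩ := h1 ⟨mstar, a⟩
        rcases tot x hy1.1 hy2.1 with h | h
        · refine ⟨y2, hy2, fun l hl => ?_⟩
          rcases Finset.mem_insert.mp hl with rfl | hl'
          · exact hy2a
          · exact fun hle => hy1s l hl' (h.trans hle)
        · refine ⟨y1, hy1, fun l hl => ?_⟩
          rcases Finset.mem_insert.mp hl with rfl | hl'
          · exact fun hle => hy2a (h.trans hle)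
          · exact hy1s l hl'
    obtain ⟨y, hy, hys⟩ := key Finset.univ
    exact ⟨y, hy.1, hy.2, fun l => hys l (Finset.mem_univ l)⟩
  -- principality
  have principal : ∀ (x y : T), y ≤ x → (∀ l : Fin (κ mstar), ¬ y ≤ τ mstar l) →
      ∀ p ∈ Y mstar, (p ≤ x ↔ p ≤ y) := by
    intro x y hyx hesc p hp
    constructor
    · intro hpx
      rcases tot x hpx hyx with h | h
      · exact h
      · obtain ⟨l, hl⟩ := hcov mstar p hp
        exact absurd (h.trans hl) (hesc l)
    · exact fun h => h.trans hyx
  -- escape points for case-B coordinates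
  have hescCh : ∀ (c : C) (i : Fin k₀), ∃ y : T, ¬ CA κ τ (t1 c i) →
      (y ≤ t1 c i ∧ y ∈ Wset κ τ ∧ ∀ l : Fin (κ mstar), ¬ y ≤ τ mstar l) := by
    intro c i
    by_cases h : CA κ τ (t1 c i)
    · exact ⟨hTne.some, fun h' => absurd h h'⟩
    · obtain ⟨y, h1, h2, h3⟩ := escape _ h
      exact ⟨y, fun _ => ⟨h1, h2, h3⟩⟩
  choose esc hesc using hescCh
  -- homes of escape points
  have hhomeCh : ∀ (c : C) (i : Fin k₀), ∃ oj : Option ((m : ℕ) × Fin (κ m)),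
      ¬ CA κ τ (t1 c i) → ∃ j, oj = some j ∧ esc c i ≤ τ j.1 j.2 := by
    intro c i
    by_cases h : CA κ τ (t1 c i)
    · exact ⟨none, fun h' => absurd h h'⟩
    · have hyW : esc c i ∈ Wset κ τ := (hesc c i h).2.1
      obtain ⟨j, hj⟩ := Set.mem_iUnion.mp hyW
      exact ⟨some j, fun _ => ⟨j, rfl, Set.mem_Iic.mp hj⟩⟩
  choose home hhome using hhomeCh
  -- pigeonhole 4 : on homes
  obtain ⟨H, hS4⟩ := exists_uncountable_fiber hS3 home
  -- pigeonhole 5 : pair with equal traces on fiber m*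
  obtain ⟨c, hc, c', hc', hne, hVA⟩ := exists_pair_fiber hS4
    (fun c => (fun (i : Fin k₀) (v : Fin (κ mstar) → Bool) =>
      decide (∃ p : T, p ∈ Y mstar ∧ pattern κ τ mstar p = v ∧ p ≤ t1 c i)))
  -- unpack membership data
  obtain ⟨⟨⟨⟨-, hkc⟩, hPc⟩, hDc⟩, hHc⟩ := hc
  obtain ⟨⟨⟨⟨-, hkc'⟩, hPc'⟩, hDc'⟩, hHc'⟩ := hc'
  -- the key trace equality
  have key : ∀ p, p ∈ Y mstar → ∀ i : Fin k₀, (p ≤ t1 c i ↔ p ≤ t1 c' i) := by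
    intro p hp i
    have hpW : p ∈ Wset κ τ := hWmem hp
    have hDci : (oA (t1 c i), oM (t1 c i)) = D i := congrFun hDc i
    have hDc'i : (oA (t1 c' i), oM (t1 c' i)) = D i := congrFun hDc' i
    have hiff : ∀ v : Fin (κ mstar) → Bool,
        ((∃ q : T, q ∈ Y mstar ∧ pattern κ τ mstar q = v ∧ q ≤ t1 c i) ↔
         (∃ q : T, q ∈ Y mstar ∧ pattern κ τ mstar q = v ∧ q ≤ t1 c' i)) := by
      intro v
      exact decide_eq_decide.mp (congrFun (congrFun hVA i) v)
    cases hDi : (D i).1 with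
    | some j =>
      have hoAc : oA (t1 c i) = some j := by
        have := congrArg Prod.fst hDci
        simp only at this
        rw [this, hDi]
      have hoAc' : oA (t1 c' i) = some j := by
        have := congrArg Prod.fst hDc'i
        simp only at this
        rw [this, hDi]
      have dir : ∀ (a b : C), oA (t1 a i) = some j → oA (t1 b i) = some j →
          oM (t1 b i) ≠ some mstar →
          (∀ v : Fin (κ mstar) → Bool,
            ((∃ q : T, q ∈ Y mstar ∧ pattern κ τ mstar q = v ∧ q ≤ t1 a i) ↔
             (∃ q : T, q ∈ Y mstar ∧ pattern κ τ mstar q = v ∧ q ≤ t1 b i))) →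
          p ≤ t1 a i → p ≤ t1 b i := by
        intro a b hAa hAb hMb hiffab hple
        have hsub1 := hA1 _ _ hAa
        have hsub2 := hA1 _ _ hAb
        have hpj : p ≤ τ j.1 j.2 :=
          Set.mem_Iic.mp (hsub1 ⟨Set.mem_Iic.mpr hple, hpW⟩)
        obtain ⟨p', hp'Y, hp'pat, hp'le⟩ := (hiffab (pattern κ τ mstar p)).mp ⟨p, hp, rfl, hple⟩
        by_contra hnle
        have hp'j : p' ≤ τ j.1 j.2 :=
          Set.mem_Iic.mp (hsub2 ⟨Set.mem_Iic.mpr hp'le, hWmem hp'Y⟩)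
        have hstr : Str κ τ Y j (t1 b i) mstar :=
          ⟨p', p, hp'Y, hp, hp'j, hpj, hp'pat, hp'le, hnle⟩
        exact hMb (hA3 _ _ _ hAb hstr)
      have hMc : oM (t1 c i) ≠ some mstar := by
        have := congrArg Prod.snd hDci
        simp only at this
        rw [this]
        exact hmstar i
      have hMc' : oM (t1 c' i) ≠ some mstar := by
        have := congrArg Prod.snd hDc'i
        simp only at this
        rw [this]
        exact hmstar i
      exact ⟨dir c c' hoAc hoAc' hMc' hiff,
        dir c' c hoAc' hoAc hMc (fun v => (hiff v).symm)⟩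
    | none =>
      have hBc : ¬ CA κ τ (t1 c i) := by
        intro hca
        obtain ⟨j, hj⟩ := hA2 _ hca
        have h2 : some j = (D i).1 := by
          rw [← hj]
          exact congrArg Prod.fst hDci
        rw [hDi] at h2
        exact Option.some_ne_none j h2
      have hBc' : ¬ CA κ τ (t1 c' i) := by
        intro hca
        obtain ⟨j, hj⟩ := hA2 _ hca
        have h2 : some j = (D i).1 := by
          rw [← hj]
          exact congrArg Prod.fst hDc'i
        rw [hDi] at h2
        exact Option.some_ne_none j h2
      obtain ⟨hy1le, hy1W, hy1esc⟩ := hesc c i hBc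
      obtain ⟨hy2le, hy2W, hy2esc⟩ := hesc c' i hBc'
      obtain ⟨j1, hj1eq, hj1le⟩ := hhome c i hBc
      obtain ⟨j2, hj2eq, hj2le⟩ := hhome c' i hBc'
      have hjj : j1 = j2 := by
        have h1 : home c i = home c' i := by rw [hHc, hHc']
        rw [hj1eq, hj2eq] at h1
        exact Option.some.inj h1
      subst hjj
      rcases tot (τ j1.1 j1.2) hj1le hj2le with h | h
      · have e1 := principal (t1 c i) (esc c i) hy1le hy1esc p hp
        have e2 := principal (t1 c' i) (esc c i) (h.trans hy2le) hy1esc p hp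
        rw [e1, e2]
      · have e1 := principal (t1 c i) (esc c' i) (h.trans hy1le) hy2esc p hp
        have e2 := principal (t1 c' i) (esc c' i) hy2le hy2esc p hp
        rw [e1, e2]
  -- contradiction
  obtain ⟨pp, hppY, hppdiff⟩ := hdiff mstar c c' hne
  apply hppdiff
  have hgc : G c = BRep k₀ (t1 c) P₀ := by
    rw [hG1 c hkc, hPc]
  have hgc' : G c' = BRep k₀ (t1 c') P₀ := by
    rw [hG1 c' hkc', hPc']
  rw [hgc, hgc']
  rw [mem_BRep_iff, mem_BRep_iff]
  have heq : (fun i => decide (pp ≤ t1 c i)) = (fun i => decide (pp ≤ t1 c' i)) :=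
    funext fun i => decide_eq_decide.mpr (key pp hppY i)
  rw [heq]

theorem stmt19main {T : Type*} [PartialOrder T]
    (hpseudo : ∀ t : T, IsChain (· ≤ ·) (Set.Iic t))
    (B C : Type*) [BooleanAlgebra B] [BooleanAlgebra C] [Infinite B] [Uncountable C] :
    ¬ ∃ (f : BoundedLatticeHom B (Set T)) (g : BoundedLatticeHom C (Set T)),
        Function.Injective f ∧ Function.Injective g ∧
        (∀ b : B, InBAGen (Set.range (Set.Iic : T → Set T)) (f b)) ∧
        (∀ c : C, InBAGen (Set.range (Set.Iic : T → Set T)) (g c)) ∧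
        ∀ (b : B) (c : C), b ≠ ⊥ → c ≠ ⊥ → f b ⊓ g c ≠ ⊥ := by
  rintro ⟨f, g, hfinj, hginj, hfgen, hggen, hind⟩
  classical
  obtain ⟨b, hbne, hbdisj⟩ := exists_disjoint_seq (B := B)
  -- g preserves complements
  have gcompl : ∀ c : C, g cᶜ = (g c)ᶜ := by
    intro c
    have h1 : g c ⊓ g cᶜ = ⊥ := by rw [← map_inf, inf_compl_eq_bot, map_bot]
    have h2 : g c ⊔ g cᶜ = ⊤ := by rw [← map_sup, sup_compl_eq_top, map_top]
    ext p
    constructor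
    · intro hp hp2
      have hmem : p ∈ g c ⊓ g cᶜ := ⟨hp2, hp⟩
      rw [h1] at hmem
      exact hmem
    · intro hp
      have hmem : p ∈ g c ⊔ g cᶜ := by
        rw [h2]
        trivial
      rcases hmem with h | h
      · exact absurd h hp
      · exact h
  -- representations for the f-side
  have hXrep : ∀ n : ℕ, ∃ (k : ℕ) (t : Fin k → T) (P : (Fin k → Bool) → Bool),
      (f (b n) : Set T) = BRep k t P := fun n => rep_of_InBAGen (hfgen (b n))
  choose k0 t0 P0 hX using hXrep
  -- outside lemma
  have houtside : ∀ n : ℕ, ¬ (∀ p ∈ (f (b n) : Set T), ∃ i, p ≤ t0 n i) →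
      ∀ p : T, (∀ i, ¬ p ≤ t0 n i) → p ∈ (f (b n) : Set T) := by
    intro n hn p hp
    push_neg at hn
    obtain ⟨p₁, hp₁mem, hp₁⟩ := hn
    rw [hX n] at hp₁mem ⊢
    rw [mem_BRep_iff] at hp₁mem ⊢
    have he : (fun i => decide (p ≤ t0 n i)) = (fun i => decide (p₁ ≤ t0 n i)) := by
      funext i
      rw [decide_eq_false (hp i), decide_eq_false (hp₁ i)]
    rw [he]
    exact hp₁mem
  -- cover trichotomy
  obtain ⟨a, bb, bad, hcover⟩ : ∃ a bb bad : ℕ, ∀ m, m ≠ bad → ∀ p ∈ (f (b m) : Set T),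
      (∃ i, p ≤ t0 m i) ∨ (∃ i, p ≤ t0 a i) ∨ (∃ i, p ≤ t0 bb i) := by
    by_cases h2 : ∃ a bb : ℕ, a ≠ bb ∧ ¬(∀ p ∈ (f (b a) : Set T), ∃ i, p ≤ t0 a i) ∧
        ¬(∀ p ∈ (f (b bb) : Set T), ∃ i, p ≤ t0 bb i)
    · obtain ⟨a, bb, hab, ha, hbb⟩ := h2
      refine ⟨a, bb, 0, fun m _ p _ => ?_⟩
      by_contra hcon
      push_neg at hcon
      obtain ⟨h1', h2', h3'⟩ := hcon
      have pa : p ∈ (f (b a) : Set T) := houtside a ha p h2'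
      have pb : p ∈ (f (b bb) : Set T) := houtside bb hbb p h3'
      have hb0 : b a ⊓ b bb = ⊥ := hbdisj a bb hab
      have hfb : f (b a) ⊓ f (b bb) = ⊥ := by rw [← map_inf, hb0, map_bot]
      have hmem : p ∈ f (b a) ⊓ f (b bb) := ⟨pa, pb⟩
      rw [hfb] at hmem
      exact hmem
    · push_neg at h2
      by_cases h1 : ∃ a₂ : ℕ, ¬(∀ p ∈ (f (b a₂) : Set T), ∃ i, p ≤ t0 a₂ i)
      · obtain ⟨a₂, ha₂⟩ := h1
        push_neg at ha₂
        refine ⟨a₂, a₂, a₂, fun m hm p hp => Or.inl ?_⟩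
        by_contra hcon
        push_neg at hcon
        obtain ⟨q, hq, hq2⟩ := ha₂
        obtain ⟨i, hi⟩ := h2 m a₂ hm ⟨p, hp, hcon⟩ q hq
        exact hq2 i hi
      · push_neg at h1
        exact ⟨0, 0, 0, fun m _ p hp => Or.inl (h1 m p hp)⟩
  -- skip function
  obtain ⟨sk, hskne, hskinj⟩ : ∃ sk : ℕ → ℕ, (∀ m, sk m ≠ bad) ∧ Function.Injective sk := by
    refine ⟨fun m => if m < bad then m else m + 1, ?_, ?_⟩
    · intro m
      dsimp only
      split_ifs <;> omega
    · intro m n h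
      dsimp only at h
      split_ifs at h <;> omega
  -- apply the core lemma
  refine core hpseudo (C := C)
    (fun m => k0 (sk m) + (k0 a + k0 bb))
    (fun m => Fin.append (t0 (sk m)) (Fin.append (t0 a) (t0 bb)))
    (fun m v => P0 (sk m) (fun i => v (Fin.castAdd (k0 a + k0 bb) i)))
    (fun m => (f (b (sk m)) : Set T))
    ?_ ?_ ?_ (fun c => (g c : Set T)) (fun c => rep_of_InBAGen (hggen c)) ?_
  · -- hrep
    intro m
    rw [hX (sk m)]
    ext p
    rw [mem_BRep_iff, mem_BRep_iff]
    have he : (fun i => decide (p ≤ Fin.append (t0 (sk m)) (Fin.append (t0 a) (t0 bb))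
        (Fin.castAdd (k0 a + k0 bb) i))) = (fun i => decide (p ≤ t0 (sk m) i)) := by
      funext i
      rw [Fin.append_left]
    rw [he]
  · -- hdisjY
    intro m n hmn p hpm hpn
    have hb0 : b (sk m) ⊓ b (sk n) = ⊥ := hbdisj _ _ (fun hh => hmn (hskinj hh))
    have hfb : f (b (sk m)) ⊓ f (b (sk n)) = ⊥ := by rw [← map_inf, hb0, map_bot]
    have hmem : p ∈ f (b (sk m)) ⊓ f (b (sk n)) := ⟨hpm, hpn⟩
    rw [hfb] at hmem
    exact hmem
  · -- hcov
    intro m p hp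
    rcases hcover (sk m) (hskne m) p hp with ⟨i, hi⟩ | ⟨i, hi⟩ | ⟨i, hi⟩
    · refine ⟨Fin.castAdd (k0 a + k0 bb) i, ?_⟩
      rw [Fin.append_left]
      exact hi
    · refine ⟨Fin.natAdd (k0 (sk m)) (Fin.castAdd (k0 bb) i), ?_⟩
      rw [Fin.append_right, Fin.append_left]
      exact hi
    · refine ⟨Fin.natAdd (k0 (sk m)) (Fin.natAdd (k0 a) i), ?_⟩
      rw [Fin.append_right, Fin.append_right]
      exact hi
  · -- hdiff
    intro m c c' hcc
    have hsd : c \ c' ≠ ⊥ ∨ c' \ c ≠ ⊥ := by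
      by_contra hcon
      push_neg at hcon
      obtain ⟨hl, hr⟩ := hcon
      rw [sdiff_eq_bot_iff] at hl hr
      exact hcc (le_antisymm hl hr)
    rcases hsd with hd | hd
    · have hne2 := hind (b (sk m)) (c \ c') (hbne _) hd
      have hnonempty : ((f (b (sk m)) : Set T) ∩ (g (c \ c') : Set T)).Nonempty := by
        rw [Set.nonempty_iff_ne_empty]
        intro hcon
        exact hne2 (by rw [show f (b (sk m)) ⊓ g (c \ c') =
          ((f (b (sk m)) : Set T) ∩ (g (c \ c') : Set T)) from rfl, hcon, Set.bot_eq_empty])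
      obtain ⟨p, hp⟩ := hnonempty
      have hgs : (g (c \ c') : Set T) = (g c : Set T) ∩ ((g c' : Set T))ᶜ := by
        rw [sdiff_eq, map_inf, gcompl]
        rfl
      rw [hgs] at hp
      exact ⟨p, hp.1, fun hiff2 => hp.2.2 (hiff2.mp hp.2.1)⟩
    · have hne2 := hind (b (sk m)) (c' \ c) (hbne _) hd
      have hnonempty : ((f (b (sk m)) : Set T) ∩ (g (c' \ c) : Set T)).Nonempty := by
        rw [Set.nonempty_iff_ne_empty]
        intro hcon
        exact hne2 (by rw [show f (b (sk m)) ⊓ g (c' \ c) =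
          ((f (b (sk m)) : Set T) ∩ (g (c' \ c) : Set T)) from rfl, hcon, Set.bot_eq_empty])
      obtain ⟨p, hp⟩ := hnonempty
      have hgs : (g (c' \ c) : Set T) = (g c' : Set T) ∩ ((g c : Set T))ᶜ := by
        rw [sdiff_eq, map_inf, gcompl]
        rfl
      rw [hgs] at hp
      exact ⟨p, hp.1, fun hiff2 => hp.2.2 (hiff2.mpr hp.2.1)⟩

end S19

/-- The initial chain algebra on a pseudotree `T` contains no subalgebra isomorphic to
the free product of an infinite Boolean algebra `B` and an uncountable Boolean algebra
`C`.  Such a subalgebra is given precisely by a pair of Boolean embeddings of `B` and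
`C` into the initial chain algebra (the subalgebra of `Set T` generated by the initial
chains `(-∞, t]`) whose images are independent, i.e. `f b ⊓ g c ≠ ⊥` whenever
`b ≠ ⊥` and `c ≠ ⊥`. -/
theorem stmt19 {T : Type*} [PartialOrder T]
    (hpseudo : ∀ t : T, IsChain (· ≤ ·) (Set.Iic t))
    (B C : Type*) [BooleanAlgebra B] [BooleanAlgebra C] [Infinite B] [Uncountable C] :
    ¬ ∃ (f : BoundedLatticeHom B (Set T)) (g : BoundedLatticeHom C (Set T)),
        Function.Injective f ∧ Function.Injective g ∧
        (∀ b : B, InBAGen (Set.range (Set.Iic : T → Set T)) (f b)) ∧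
        (∀ c : C, InBAGen (Set.range (Set.Iic : T → Set T)) (g c)) ∧
        ∀ (b : B) (c : C), b ≠ ⊥ → c ≠ ⊥ → f b ⊓ g c ≠ ⊥ :=
  S19.stmt19main hpseudo B C
end
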